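/- arXiv:2409.18871 — 4 statements merged into one kernel-verified Lean document; each statement's English description precedes it below -/
import Mathlib

section
/- Let X be a graph and R a positive integer. Any 1-chain c ∈ C_1^R(X) can be written as c = b + c' where c' ∈ C_1^1(X), b = ∂a for some 2-chain a ∈ C_2^R(X), with ‖c'‖₁ ≤ R·‖c‖₁ and ‖a‖₁ ≤ (R+1)·‖c‖₁. Moreover, if c has integer coefficients, then b, c', and a can be taken with integer coefficients. -/
open Finsupp

variable {V : Type*}

/-- 0-chains. -/
abbrev C0 (V : Type*) := V →₀ ℝ
/-- 1-chains: free real vector space on ordered pairs of vertices. -/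
abbrev C1 (V : Type*) := (V × V) →₀ ℝ
/-- 2-chains: free real vector space on ordered triples of vertices. -/
abbrev C2 (V : Type*) := (V × V × V) →₀ ℝ
/-- 3-chains. -/
abbrev C3 (V : Type*) := (V × V × V × V) →₀ ℝ

/-- ℓ¹-norm of a finitely supported chain. -/
noncomputable def l1 {α : Type*} (c : α →₀ ℝ) : ℝ := c.support.sum fun t => |c t|

/-- Boundary map ∂ : C₂ → C₁, (x₀,x₁,x₂) ↦ (x₁,x₂) − (x₀,x₂) + (x₀,x₁). -/
noncomputable def bdry2 : C2 V →ₗ[ℝ] C1 V :=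
  Finsupp.lsum ℝ fun t => LinearMap.toSpanSingleton ℝ (C1 V)
    (single (t.2.1, t.2.2) 1 - single (t.1, t.2.2) 1 + single (t.1, t.2.1) 1)

/-- Boundary map ∂ : C₁ → C₀, (x₀,x₁) ↦ x₁ − x₀. -/
noncomputable def bdry1 : C1 V →ₗ[ℝ] C0 V :=
  Finsupp.lsum ℝ fun t => LinearMap.toSpanSingleton ℝ (C0 V)
    (single t.2 1 - single t.1 1)

/-- Boundary map ∂ : C₃ → C₂. -/
noncomputable def bdry3 : C3 V →ₗ[ℝ] C2 V :=
  Finsupp.lsum ℝ fun t => LinearMap.toSpanSingleton ℝ (C2 V)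
    (single (t.2.1, t.2.2.1, t.2.2.2) 1 - single (t.1, t.2.2.1, t.2.2.2) 1
      + single (t.1, t.2.1, t.2.2.2) 1 - single (t.1, t.2.1, t.2.2.1) 1)

/-- Two vertices are at (finite) distance at most R. -/
def pairOK (G : SimpleGraph V) (R : ℕ) (a b : V) : Prop :=
  G.Reachable a b ∧ G.dist a b ≤ R

/-- Membership in C₁^R : supported on pairs at distance ≤ R. -/
def memC1R (G : SimpleGraph V) (R : ℕ) (c : C1 V) : Prop :=
  ∀ t ∈ c.support, pairOK G R t.1 t.2

/-- Membership in C₂^R : supported on triples of diameter ≤ R. -/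
def memC2R (G : SimpleGraph V) (R : ℕ) (c : C2 V) : Prop :=
  ∀ t ∈ c.support, pairOK G R t.1 t.2.1 ∧ pairOK G R t.1 t.2.2 ∧ pairOK G R t.2.1 t.2.2

/-- Membership in B₁^R = ∂C₂^R. -/
def memB1R (G : SimpleGraph V) (R : ℕ) (b : C1 V) : Prop :=
  ∃ a : C2 V, memC2R G R a ∧ bdry2 a = b

/-- The filling norm ‖b‖_F^R = inf of ℓ¹-norms of fillings in C₂^R. -/
noncomputable def fillNorm (G : SimpleGraph V) (R : ℕ) (b : C1 V) : ℝ :=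
  sInf {r | ∃ a : C2 V, memC2R G R a ∧ bdry2 a = b ∧ r = l1 a}

/-- The 1-chain c(p) associated to a walk p. -/
noncomputable def walkChain (G : SimpleGraph V) {x y : V} (p : G.Walk x y) : C1 V :=
  (p.darts.map fun d => single d.toProd (1 : ℝ)).sum

/-- A walk is geodesic if its length realizes the distance of its endpoints. -/
def IsGeodesicWalk (G : SimpleGraph V) {x y : V} (p : G.Walk x y) : Prop :=
  p.length = G.dist x y

/-- Geodesic triangles of G are n-slim. -/
def SlimTriangles (G : SimpleGraph V) (n : ℕ) : Prop :=
  ∀ (x y z : V) (p : G.Walk x y) (q : G.Walk y z) (r : G.Walk x z),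
    IsGeodesicWalk G p → IsGeodesicWalk G q → IsGeodesicWalk G r →
    (∀ v ∈ p.support, ∃ w, (w ∈ q.support ∨ w ∈ r.support) ∧ G.dist v w ≤ n) ∧
    (∀ v ∈ q.support, ∃ w, (w ∈ p.support ∨ w ∈ r.support) ∧ G.dist v w ≤ n) ∧
    (∀ v ∈ r.support, ∃ w, (w ∈ p.support ∨ w ∈ q.support) ∧ G.dist v w ≤ n)

/-- A real chain has integer coefficients. -/
def IntCoeffs {α : Type*} (c : α →₀ ℝ) : Prop := ∀ t, ∃ n : ℤ, c t = n

/-- X has a finite homological isoperimetric function with parameters R₀, θ :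
for every closed path p, c(p) ∈ B₁^{R₀} and ‖c(p)‖_F^{R₀} ≤ θ(length p). -/
def FinHomIsop (G : SimpleGraph V) (R₀ : ℕ) (θ : ℕ → ℝ) : Prop :=
  ∀ (x : V) (p : G.Walk x x), memB1R G R₀ (walkChain G p) ∧
    fillNorm G R₀ (walkChain G p) ≤ θ p.length

/-- A 2-cochain is bounded on each C₂^R. -/
def Bdd2 {W : Type*} [NormedAddCommGroup W] [NormedSpace ℝ W]
    (G : SimpleGraph V) (f : C2 V →ₗ[ℝ] W) : Prop :=
  ∀ R : ℕ, ∃ M : ℝ, ∀ c : C2 V, memC2R G R c → ‖f c‖ ≤ M * l1 c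

/-- A 1-cochain is bounded on each C₁^R. -/
def Bdd1 {W : Type*} [NormedAddCommGroup W] [NormedSpace ℝ W]
    (G : SimpleGraph V) (f : C1 V →ₗ[ℝ] W) : Prop :=
  ∀ R : ℕ, ∃ M : ℝ, ∀ c : C1 V, memC1R G R c → ‖f c‖ ≤ M * l1 c

/-- A Banach space is 1-injective: bounded linear maps into it extend from
subspaces of normed spaces with the same norm. -/
def IsOneInjective (W : Type*) [NormedAddCommGroup W] [NormedSpace ℝ W] : Prop :=
  ∀ (E : Type) [NormedAddCommGroup E] [NormedSpace ℝ E],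
    ∀ (p : Subspace ℝ E) (φ : p →L[ℝ] W),
      ∃ ψ : E →L[ℝ] W, (∀ x : p, ψ x = φ x) ∧ ‖ψ‖ ≤ ‖φ‖

/-!
Join each pair `(x, y)` in the support of `c` by a geodesic `x = u₀, u₁, …, uₙ = y` with `n ≤ R`.
Coning the geodesic from `x` gives the triangles `(x, uᵢ, uᵢ₊₁)`, of diameter at most `R`, whose
boundary is the edge path minus `(x, y)` plus the degenerate `(x, x) = ∂(x, x, x)`. Hence
`(x, y) = ∂a + c'` with `c'` the edge path (norm `≤ R`) and `a` of norm `≤ R + 1`, both with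
integer coefficients; the decomposition of `c` is the `c`-weighted sum of these.
-/

section l1

variable {α β : Type*}

lemma l1_eq_sum_of_support_subset (c : α →₀ ℝ) {s : Finset α} (h : c.support ⊆ s) :
    l1 c = ∑ t ∈ s, |c t| :=
  Finset.sum_subset h fun t _ ht => by rw [notMem_support_iff.mp ht, abs_zero]

lemma l1_single (t : α) (r : ℝ) : l1 (single t r) = |r| := by
  simp [l1_eq_sum_of_support_subset _ support_single_subset]

lemma l1_neg (x : α →₀ ℝ) : l1 (-x) = l1 x := by
  simp [l1, support_neg]

lemma l1_smul (r : ℝ) (x : α →₀ ℝ) : l1 (r • x) = |r| * l1 x := by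
  rw [l1_eq_sum_of_support_subset _ support_smul, l1, Finset.mul_sum]
  simp [abs_mul]

lemma l1_add_le (x y : α →₀ ℝ) : l1 (x + y) ≤ l1 x + l1 y := by
  classical
  rw [l1_eq_sum_of_support_subset _ support_add,
    l1_eq_sum_of_support_subset x Finset.subset_union_left,
    l1_eq_sum_of_support_subset y Finset.subset_union_right, ← Finset.sum_add_distrib]
  exact Finset.sum_le_sum fun t _ => abs_add_le (x t) (y t)

lemma l1_sub_le (x y : α →₀ ℝ) : l1 (x - y) ≤ l1 x + l1 y := by
  simpa [sub_eq_add_neg, l1_neg] using l1_add_le x (-y)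

lemma l1_sum_le (s : Finset β) (f : β → α →₀ ℝ) :
    l1 (∑ b ∈ s, f b) ≤ ∑ b ∈ s, l1 (f b) := by
  classical
  induction s using Finset.induction_on with
  | empty => simp [l1]
  | insert b s hb ih =>
    rw [Finset.sum_insert hb, Finset.sum_insert hb]
    exact (l1_add_le _ _).trans (by gcongr)

lemma l1_mapDomain {f : α → β} (hf : Function.Injective f) (x : α →₀ ℝ) :
    l1 (mapDomain f x) = l1 x :=
  sum_mapDomain_index_inj (h := fun _ r => |r|) hf

lemma l1_linearCombination_le {f : β → α →₀ ℝ} {c : β →₀ ℝ} {K : ℝ}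
    (hf : ∀ t ∈ c.support, l1 (f t) ≤ K) : l1 (linearCombination ℝ f c) ≤ K * l1 c := by
  calc l1 (linearCombination ℝ f c)
      ≤ ∑ t ∈ c.support, |c t| * l1 (f t) := by
        rw [linearCombination_apply, sum]
        refine (l1_sum_le _ _).trans_eq ?_
        simp only [l1_smul]
    _ ≤ ∑ t ∈ c.support, |c t| * K :=
        Finset.sum_le_sum fun t ht => mul_le_mul_of_nonneg_left (hf t ht) (abs_nonneg _)
    _ = K * l1 c := by rw [l1, Finset.mul_sum]; simp only [mul_comm]

end l1

section IntCoeffs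

variable {α β : Type*}

lemma intCoeffs_iff (c : α →₀ ℝ) : IntCoeffs c ↔ ∀ t, c t ∈ (Int.castRingHom ℝ).range := by
  simp [IntCoeffs, eq_comm]

lemma intCoeffs_single_one (t : α) : IntCoeffs (single t (1 : ℝ)) := by
  classical
  rw [intCoeffs_iff]
  intro s
  rw [single_apply]
  split_ifs
  exacts [one_mem _, zero_mem _]

lemma IntCoeffs.add {x y : α →₀ ℝ} (hx : IntCoeffs x) (hy : IntCoeffs y) : IntCoeffs (x + y) := by
  rw [intCoeffs_iff] at *
  exact fun t => add_mem (hx t) (hy t)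

lemma IntCoeffs.sub {x y : α →₀ ℝ} (hx : IntCoeffs x) (hy : IntCoeffs y) : IntCoeffs (x - y) := by
  rw [intCoeffs_iff] at *
  exact fun t => sub_mem (hx t) (hy t)

lemma IntCoeffs.mapDomain {f : α → β} (hf : Function.Injective f) {x : α →₀ ℝ}
    (hx : IntCoeffs x) : IntCoeffs (mapDomain f x) := fun s => by
  by_cases hs : s ∈ Set.range f
  · obtain ⟨t, rfl⟩ := hs
    simpa [mapDomain_apply hf] using hx t
  · exact ⟨0, by simp [mapDomain_of_notMem_range _ _ hs]⟩

lemma IntCoeffs.linearCombination {f : β → α →₀ ℝ} {c : β →₀ ℝ} (hc : IntCoeffs c)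
    (hf : ∀ t, IntCoeffs (f t)) : IntCoeffs (linearCombination ℝ f c) := by
  rw [intCoeffs_iff] at *
  intro s
  rw [linearCombination_apply, sum, finsetSum_apply]
  exact sum_mem fun t _ => mul_mem (hc t) ((intCoeffs_iff _).mp (hf t) s)

end IntCoeffs

lemma Finsupp.linearCombination_mem {α M : Type*} [AddCommGroup M] [Module ℝ M]
    {p : Submodule ℝ M} {f : α → M} {c : α →₀ ℝ} (hf : ∀ t ∈ c.support, f t ∈ p) :
    linearCombination ℝ f c ∈ p := by
  rw [linearCombination_apply]
  exact Submodule.finsuppSum_mem ℝ _ _ _ fun t ht => p.smul_mem _ (hf t (mem_support_iff.mpr ht))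

section Chains

variable (G : SimpleGraph V)

def triplesWithin (R : ℕ) : Set (V × V × V) :=
  {t | pairOK G R t.1 t.2.1 ∧ pairOK G R t.1 t.2.2 ∧ pairOK G R t.2.1 t.2.2}

lemma memC2R_iff_mem_supported (R : ℕ) (a : C2 V) :
    memC2R G R a ↔ a ∈ supported ℝ ℝ (triplesWithin G R) :=
  Iff.rfl

lemma memC1R_iff_mem_supported (R : ℕ) (c : C1 V) :
    memC1R G R c ↔ c ∈ supported ℝ ℝ {t | pairOK G R t.1 t.2} :=
  Iff.rfl

lemma bdry2_single (t : V × V × V) (r : ℝ) :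
    bdry2 (single t r) =
      r • (single (t.2.1, t.2.2) 1 - single (t.1, t.2.2) 1
        + single (t.1, t.2.1) 1) := by
  simp [bdry2]

lemma bdry1_single (t : V × V) (r : ℝ) :
    bdry1 (single t r) = r • (single t.2 1 - single t.1 1) := by
  simp [bdry1]

noncomputable def cone (x : V) : C1 V →ₗ[ℝ] C2 V :=
  lmapDomain ℝ ℝ (Prod.mk x)

lemma bdry2_cone (x : V) (σ : C1 V) :
    bdry2 (cone x σ) = σ - mapDomain (Prod.mk x) (bdry1 σ) := by
  induction σ using induction_linear with
  | zero => simp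
  | add σ τ hσ hτ => rw [map_add, map_add, map_add, mapDomain_add, hσ, hτ]; abel
  | single t r =>
    simp only [cone, lmapDomain_apply, mapDomain_single, bdry2_single,
      bdry1_single, mapDomain_smul, mapDomain_sub]
    rw [smul_sub, smul_add, smul_sub, ← smul_single_one t r]
    abel

lemma cone_mem_supported (x : V) {s : Set (V × V)} {σ : C1 V} (hσ : σ ∈ supported ℝ ℝ s) :
    cone x σ ∈ supported ℝ ℝ (Prod.mk x '' s) := by
  rw [← lmapDomain_supported]
  exact Submodule.mem_map_of_mem hσ

lemma walkChain_nil (u : V) : walkChain G (SimpleGraph.Walk.nil : G.Walk u u) = 0 := by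
  simp [walkChain]

lemma walkChain_cons {u v w : V} (h : G.Adj u v) (p : G.Walk v w) :
    walkChain G (SimpleGraph.Walk.cons h p) = single (u, v) 1 + walkChain G p := by
  simp [walkChain]

lemma bdry1_walkChain {u v : V} (p : G.Walk u v) :
    bdry1 (walkChain G p) = single v 1 - single u 1 := by
  induction p with
  | nil => simp [walkChain_nil]
  | cons h p ih => rw [walkChain_cons, map_add, ih, bdry1_single, one_smul]; abel

lemma l1_walkChain_le {u v : V} (p : G.Walk u v) : l1 (walkChain G p) ≤ p.length := by
  induction p with
  | nil => simp [walkChain_nil, l1]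
  | cons h p ih =>
    rw [walkChain_cons, SimpleGraph.Walk.length_cons, Nat.cast_succ]
    refine (l1_add_le _ _).trans ?_
    rw [l1_single, abs_one]
    linarith

lemma intCoeffs_walkChain {u v : V} (p : G.Walk u v) : IntCoeffs (walkChain G p) := by
  induction p with
  | nil => exact fun _ => ⟨0, by simp [walkChain_nil]⟩
  | cons h p ih => rw [walkChain_cons]; exact (intCoeffs_single_one _).add ih

lemma walkChain_mem_supported {u v : V} (p : G.Walk u v) :
    walkChain G p ∈ supported ℝ ℝ {t | ∃ d ∈ p.darts, d.toProd = t} := by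
  induction p with
  | nil => simp [walkChain_nil]
  | cons h p ih =>
    rw [walkChain_cons]
    refine add_mem (single_mem_supported ℝ _ ?_) (supported_mono ?_ ih)
    · exact ⟨⟨_, h⟩, List.mem_cons_self, rfl⟩
    · rintro _ ⟨d, hd, rfl⟩
      exact ⟨d, List.mem_cons_of_mem _ hd, rfl⟩

noncomputable def walkFilling {x y : V} (p : G.Walk x y) : C2 V :=
  single (x, x, x) 1 - cone x (walkChain G p)

lemma bdry2_walkFilling_add_walkChain {x y : V} (p : G.Walk x y) :
    bdry2 (walkFilling G p) + walkChain G p = single (x, y) 1 := by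
  rw [walkFilling, map_sub, bdry2_single, bdry2_cone, bdry1_walkChain, one_smul,
    mapDomain_sub, mapDomain_single, mapDomain_single]
  abel

lemma l1_walkFilling_le {x y : V} (p : G.Walk x y) : l1 (walkFilling G p) ≤ p.length + 1 := by
  have hcone : l1 (cone x (walkChain G p)) ≤ p.length :=
    (l1_mapDomain (Prod.mk_right_injective x) _).trans_le (l1_walkChain_le G p)
  refine (l1_sub_le _ _).trans ?_
  rw [l1_single, abs_one]
  linarith

lemma intCoeffs_walkFilling {x y : V} (p : G.Walk x y) : IntCoeffs (walkFilling G p) :=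
  (intCoeffs_single_one _).sub ((intCoeffs_walkChain G p).mapDomain (Prod.mk_right_injective x))

lemma dist_le_length_of_mem_support {x y v : V} (p : G.Walk x y) (hv : v ∈ p.support) :
    G.dist x v ≤ p.length := by
  classical
  exact (SimpleGraph.dist_le (p.takeUntil v hv)).trans (p.length_takeUntil_le_length hv)

lemma walkFilling_mem_supported (hconn : G.Connected) {R : ℕ} (hR : 1 ≤ R) {x y : V}
    (p : G.Walk x y) (hp : p.length ≤ R) :
    walkFilling G p ∈ supported ℝ ℝ (triplesWithin G R) := by
  have hpair : ∀ u v, G.dist u v ≤ R → pairOK G R u v := fun u v h => ⟨hconn u v, h⟩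
  have hx : ∀ v ∈ p.support, pairOK G R x v := fun v hv =>
    hpair _ _ ((dist_le_length_of_mem_support G p hv).trans hp)
  refine sub_mem (single_mem_supported ℝ _ ?_) ?_
  · have hxx := hpair x x (by simp)
    exact ⟨hxx, hxx, hxx⟩
  · refine supported_mono ?_ (cone_mem_supported x (walkChain_mem_supported G p))
    rintro _ ⟨_, ⟨d, hd, rfl⟩, rfl⟩
    refine ⟨hx _ (p.dart_fst_mem_support_of_mem_darts hd),
      hx _ (p.dart_snd_mem_support_of_mem_darts hd), hpair _ _ ?_⟩
    rw [SimpleGraph.dist_eq_one_iff_adj.mpr d.adj]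
    exact hR

lemma walkChain_mem_supported_pairOK_one (hconn : G.Connected) {u v : V} (p : G.Walk u v) :
    walkChain G p ∈ supported ℝ ℝ {t | pairOK G 1 t.1 t.2} := by
  refine supported_mono ?_ (walkChain_mem_supported G p)
  rintro _ ⟨d, -, rfl⟩
  exact ⟨hconn _ _, (SimpleGraph.dist_eq_one_iff_adj.mpr d.adj).le⟩

lemma eq_bdry2_linearCombination_add {A : V × V → C2 V} {B : V × V → C1 V}
    (h : ∀ t, bdry2 (A t) + B t = single t 1) (c : C1 V) :
    c = bdry2 (linearCombination ℝ A c) + linearCombination ℝ B c := by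
  have : bdry2 ∘ₗ linearCombination ℝ A + linearCombination ℝ B =
      LinearMap.id := lhom_ext fun t r => by
    simp [← smul_add, h t]
  exact (congrArg (· c) this).symm

end Chains

/-- any c ∈ C₁^R(X) can be written as c = ∂a + c' with c' ∈ C₁¹,
a ∈ C₂^R, ‖c'‖₁ ≤ R‖c‖₁, ‖a‖₁ ≤ (R+1)‖c‖₁; integrally if c is integral. -/
theorem chain_R_to_one (G : SimpleGraph V) (hconn : G.Connected)
    (R : ℕ) (hR : 1 ≤ R) (c : C1 V) (hc : memC1R G R c) :
    ∃ (a : C2 V) (c' : C1 V),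
      memC2R G R a ∧ memC1R G 1 c' ∧ c = bdry2 a + c' ∧
      l1 c' ≤ (R : ℝ) * l1 c ∧ l1 a ≤ ((R : ℝ) + 1) * l1 c ∧
      (IntCoeffs c → IntCoeffs a ∧ IntCoeffs c') := by
  choose geo hgeo using fun t : V × V => hconn.exists_walk_length_eq_dist t.1 t.2
  have hlen : ∀ t ∈ c.support, (geo t).length ≤ R := fun t ht => (hgeo t).trans_le (hc t ht).2
  refine ⟨linearCombination ℝ (fun t => walkFilling G (geo t)) c,
    linearCombination ℝ (fun t => walkChain G (geo t)) c, ?_, ?_,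
    eq_bdry2_linearCombination_add (fun t => bdry2_walkFilling_add_walkChain G (geo t)) c,
    ?_, ?_, fun hint => ⟨hint.linearCombination fun t => intCoeffs_walkFilling G (geo t),
      hint.linearCombination fun t => intCoeffs_walkChain G (geo t)⟩⟩
  · rw [memC2R_iff_mem_supported]
    exact linearCombination_mem fun t ht => walkFilling_mem_supported G hconn hR _ (hlen t ht)
  · rw [memC1R_iff_mem_supported]
    exact linearCombination_mem fun t _ => walkChain_mem_supported_pairOK_one G hconn _
  · refine l1_linearCombination_le fun t ht => (l1_walkChain_le G _).trans ?_
    exact_mod_cast hlen t ht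
  · refine l1_linearCombination_le fun t ht => (l1_walkFilling_le G _).trans ?_
    gcongr
    exact_mod_cast hlen t ht
end

section
/- Let X be a graph and δ ≥ 0 with X δ-hyperbolic, and let V be a 1-injective Banach space. Then every bounded 2-cocycle f ∈ Z²_{(∞)}(X;V) is the coboundary of some g ∈ C¹_{(∞)}(X;V). Moreover, there exist R₀ ∈ ℕ and a function K: ℕ × ℝ≥0 → ℝ≥0 depending only on δ, such that g can be chosen with |g|_∞^R ≤ K(R, |f|_∞^R) for every integer R ≥ R₀. In particular, H²_{(∞)}(X;V) = 0 for all hyperbolic graphs X and 1-injective Banach spaces V. -/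
open Finsupp

variable {V : Type*}

/-!
Slim triangles force `(4δ+4)`-local geodesics to move away from their starting point, so every
nonconstant closed walk contains a subwalk of length `≤ 4δ+4` that a geodesic shortcuts. Replacing
that subwalk by the shortcut and coning off the small loop at its start, induction on the length
fills a closed walk of length `n` by a chain in `C₂^{4δ+4}` of `ℓ¹`-norm `≤ (8δ+8) n`. A nonnegative
real 1-cycle on edges contains a closed walk with distinct darts, and peeling off a multiple of it
lowers the support, which gives the same linear bound for all such cycles; degenerate bigons reduce
arbitrary real 1-cycles on edges to nonnegative ones.

For a bounded cocycle `f` and a 2-chain `a`, straighten every pair `t` of `∂a` along a geodesic, at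
a cost controlled by `|f|_∞^R` at the scale `R` of `t`, and fill the remaining cycle on edges. Since
coning shows that `f` vanishes on 2-cycles, this bounds `‖f a‖` by a weighted `ℓ¹`-norm of `∂a`.
So `f` induces a functional of norm `≤ 1` on the image of `∂` in the weighted `ℓ¹`-space, and
1-injectivity of `W` extends it to the whole space; restricted to 1-chains it is the primitive `g`.
-/

namespace HyperbolicH2

open SimpleGraph

section L1

variable {α β : Type*}

lemma l1_nonneg (c : α →₀ ℝ) : 0 ≤ l1 c :=
  Finset.sum_nonneg fun _ _ => abs_nonneg _

lemma l1_eq_sum_of_support_subset {c : α →₀ ℝ} {s : Finset α} (h : c.support ⊆ s) :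
    l1 c = ∑ t ∈ s, |c t| :=
  Finset.sum_subset h fun t _ ht => by simp [notMem_support_iff.mp ht]

@[simp] lemma l1_zero : l1 (0 : α →₀ ℝ) = 0 := by simp [l1]

lemma eq_zero_of_l1_eq_zero {c : α →₀ ℝ} (h : l1 c = 0) : c = 0 := by
  ext t
  have := (Finset.sum_eq_zero_iff_of_nonneg fun s _ => abs_nonneg (c s)).mp h
  by_cases ht : t ∈ c.support
  · simpa using this t ht
  · simpa using ht

@[simp] lemma l1_single (t : α) (r : ℝ) : l1 (single t r) = |r| := by
  rcases eq_or_ne r 0 with rfl | hr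
  · simp
  · simp [l1, support_single, hr]

lemma l1_add_le (a b : α →₀ ℝ) : l1 (a + b) ≤ l1 a + l1 b := by
  classical
  rw [l1_eq_sum_of_support_subset support_add, l1_eq_sum_of_support_subset
    Finset.subset_union_left, l1_eq_sum_of_support_subset Finset.subset_union_right,
    ← Finset.sum_add_distrib]
  exact Finset.sum_le_sum fun t _ => abs_add_le (a t) (b t)

lemma l1_add_of_nonneg {a b : α →₀ ℝ} (ha : ∀ t, 0 ≤ a t) (hb : ∀ t, 0 ≤ b t) :
    l1 (a + b) = l1 a + l1 b := by
  classical
  rw [l1_eq_sum_of_support_subset support_add, l1_eq_sum_of_support_subset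
    Finset.subset_union_left, l1_eq_sum_of_support_subset Finset.subset_union_right,
    ← Finset.sum_add_distrib]
  refine Finset.sum_congr rfl fun t _ => ?_
  simp [abs_of_nonneg, ha t, hb t, add_nonneg]

lemma l1_sub_of_le {a b : α →₀ ℝ} (hb : ∀ t, 0 ≤ b t) (hba : ∀ t, b t ≤ a t) :
    l1 (a - b) = l1 a - l1 b := by
  have h := l1_add_of_nonneg (a := a - b) (fun t => by simpa using hba t) hb
  rw [sub_add_cancel] at h
  linarith

lemma l1_smul (r : ℝ) (a : α →₀ ℝ) : l1 (r • a) = |r| * l1 a := by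
  rcases eq_or_ne r 0 with rfl | hr
  · simp
  · simp [l1, support_smul_eq hr, Finset.mul_sum, abs_mul]

lemma l1_neg (a : α →₀ ℝ) : l1 (-a) = l1 a := by
  simpa using l1_smul (-1) a

lemma l1_sub_le (a b : α →₀ ℝ) : l1 (a - b) ≤ l1 a + l1 b := by
  simpa [sub_eq_add_neg, l1_neg] using l1_add_le a (-b)

lemma l1_filter_le (p : α → Prop) [DecidablePred p] (c : α →₀ ℝ) :
    l1 (c.filter p) ≤ l1 c := by
  rw [l1_eq_sum_of_support_subset (support_filter p c ▸ Finset.filter_subset _ _)]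
  exact Finset.sum_le_sum fun t _ => by by_cases h : p t <;> simp [h]

lemma l1_finset_sum_le {ι : Type*} (s : Finset ι) (g : ι → α →₀ ℝ) :
    l1 (∑ i ∈ s, g i) ≤ ∑ i ∈ s, l1 (g i) := by
  classical
  induction s using Finset.induction_on with
  | empty => simp
  | insert i s hi ih =>
    rw [Finset.sum_insert hi, Finset.sum_insert hi]
    exact (l1_add_le _ _).trans (by linarith)

lemma l1_linearCombination_le (g : α → β →₀ ℝ) (c : α →₀ ℝ) :
    l1 (linearCombination ℝ g c) ≤ c.sum fun a r => |r| * l1 (g a) := by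
  rw [linearCombination_apply]
  refine (l1_finset_sum_le _ _).trans (le_of_eq ?_)
  simp [Finsupp.sum, l1_smul]

lemma l1_linearCombination_le_mul {g : α → β →₀ ℝ} {c : α →₀ ℝ} {K : ℝ}
    (hg : ∀ a ∈ c.support, l1 (g a) ≤ K) : l1 (linearCombination ℝ g c) ≤ K * l1 c := by
  refine (l1_linearCombination_le g c).trans ?_
  rw [l1, Finset.mul_sum]
  exact Finset.sum_le_sum fun a ha => by
    rw [mul_comm K]; exact mul_le_mul_of_nonneg_left (hg a ha) (abs_nonneg _)

lemma l1_mapDomain_le (f : α → β) (c : α →₀ ℝ) : l1 (mapDomain f c) ≤ l1 c := by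
  refine (l1_finset_sum_le _ _).trans (le_of_eq ?_)
  simp only [l1_single]
  rfl

lemma norm_linearCombination_le {M : Type*} [SeminormedAddCommGroup M] [NormedSpace ℝ M]
    (g : α → M) (c : α →₀ ℝ) :
    ‖linearCombination ℝ g c‖ ≤ c.sum fun a r => |r| * ‖g a‖ := by
  rw [linearCombination_apply]
  refine (norm_sum_le _ _).trans (le_of_eq ?_)
  simp [Finsupp.sum, norm_smul]

end L1

section WeightedEmbedding

variable {α : Type*} [DecidableEq α]

noncomputable def weightedEmbedding (ω : α → ℝ) :
    (α →₀ ℝ) →ₗ[ℝ] lp (fun _ : α => ℝ) 1 :=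
  linearCombination ℝ fun t => lp.single 1 t (ω t)

lemma norm_weightedEmbedding (ω : α → ℝ) (c : α →₀ ℝ) :
    ‖weightedEmbedding ω c‖ = c.sum fun t r => |r| * |ω t| := by
  have h := lp.norm_sum_single (p := 1) (by simp) (fun t => c t * ω t) c.support
  simp only [ENNReal.toReal_one, Real.rpow_one, Real.norm_eq_abs, abs_mul] at h
  rw [weightedEmbedding, linearCombination_apply, Finsupp.sum, Finsupp.sum, ← h]
  simp_rw [← smul_eq_mul, lp.single_smul]

lemma norm_weightedEmbedding_le {ω : α → ℝ} {c : α →₀ ℝ} {K : ℝ}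
    (hK : ∀ t ∈ c.support, |ω t| ≤ K) : ‖weightedEmbedding ω c‖ ≤ K * l1 c := by
  rw [norm_weightedEmbedding, l1, Finset.mul_sum]
  exact Finset.sum_le_sum fun t ht => by
    rw [mul_comm K]; exact mul_le_mul_of_nonneg_left (hK t ht) (abs_nonneg _)

end WeightedEmbedding

lemma exists_extension_of_isOneInjective {W : Type*} [NormedAddCommGroup W] [NormedSpace ℝ W]
    (hW : IsOneInjective W) {M : Type*} [AddCommGroup M] [Module ℝ M] {E : Type}
    [NormedAddCommGroup E] [NormedSpace ℝ E] (L : M →ₗ[ℝ] E) (f : M →ₗ[ℝ] W)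
    (hf : ∀ a, ‖f a‖ ≤ ‖L a‖) :
    ∃ ψ : E →L[ℝ] W, ‖ψ‖ ≤ 1 ∧ ∀ a, ψ (L a) = f a := by
  have hker : LinearMap.ker L ≤ LinearMap.ker f := fun a ha => by
    simpa [LinearMap.mem_ker.mp ha] using hf a
  set φ : LinearMap.range L →ₗ[ℝ] W := (LinearMap.ker L).liftQ f hker ∘ₗ
    L.quotKerEquivRange.symm.toLinearMap
  have hφ : ∀ a, φ ⟨L a, LinearMap.mem_range_self L a⟩ = f a := fun a => by
    simp [φ, LinearMap.quotKerEquivRange_symm_apply_image]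
  have hbound : ∀ z, ‖φ z‖ ≤ 1 * ‖z‖ := by
    rintro ⟨_, a, rfl⟩
    rw [one_mul, hφ]
    exact hf a
  obtain ⟨ψ, hψ, hψn⟩ := hW E _ (φ.mkContinuous 1 hbound)
  exact ⟨ψ, hψn.trans (LinearMap.mkContinuous_norm_le _ zero_le_one _),
    fun a => (hψ ⟨L a, LinearMap.mem_range_self L a⟩).trans (hφ a)⟩

section Boundary

lemma bdry1_single (t : V × V) (r : ℝ) :
    bdry1 (single t r) = r • (single t.2 1 - single t.1 1 : C0 V) := by
  simp [bdry1]

lemma bdry2_single (t : V × V × V) (r : ℝ) :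
    bdry2 (single t r) =
      r • (single (t.2.1, t.2.2) 1 - single (t.1, t.2.2) 1 + single (t.1, t.2.1) 1 : C1 V) := by
  simp [bdry2]

lemma bdry3_single (t : V × V × V × V) (r : ℝ) :
    bdry3 (single t r) = r • (single (t.2.1, t.2.2.1, t.2.2.2) 1
      - single (t.1, t.2.2.1, t.2.2.2) 1 + single (t.1, t.2.1, t.2.2.2) 1
      - single (t.1, t.2.1, t.2.2.1) 1 : C2 V) := by
  simp [bdry3]

lemma bdry1_bdry2 (a : C2 V) : bdry1 (bdry2 a) = 0 := by
  suffices h : bdry1.comp (bdry2 (V := V)) = 0 from LinearMap.congr_fun h a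
  refine lhom_ext fun t r => ?_
  simp only [LinearMap.comp_apply, bdry2_single, map_smul, map_add, map_sub, bdry1_single]
  simp

noncomputable def cone₀ (v : V) : C0 V →ₗ[ℝ] C1 V :=
  linearCombination ℝ fun x => single (v, x) 1

noncomputable def cone₁ (v : V) : C1 V →ₗ[ℝ] C2 V :=
  linearCombination ℝ fun t => single (v, t.1, t.2) 1

noncomputable def cone₂ (v : V) : C2 V →ₗ[ℝ] C3 V :=
  linearCombination ℝ fun t => single (v, t.1, t.2.1, t.2.2) 1

lemma bdry2_cone₁_add_cone₀_bdry1 (v : V) (c : C1 V) :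
    bdry2 (cone₁ v c) + cone₀ v (bdry1 c) = c := by
  suffices h : bdry2.comp (cone₁ v) + (cone₀ v).comp bdry1 = LinearMap.id from
    LinearMap.congr_fun h c
  refine lhom_ext fun t r => ?_
  simp only [LinearMap.add_apply, LinearMap.comp_apply, cone₁, cone₀, linearCombination_single,
    bdry1_single, map_smul, bdry2_single, map_sub, LinearMap.id_apply]
  rw [← smul_add, ← smul_single_one t r]
  congr 1
  simp only [one_smul]
  abel

lemma bdry3_cone₂_add_cone₁_bdry2 (v : V) (a : C2 V) :
    bdry3 (cone₂ v a) + cone₁ v (bdry2 a) = a := by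
  suffices h : bdry3.comp (cone₂ v) + (cone₁ v).comp bdry2 = LinearMap.id from
    LinearMap.congr_fun h a
  refine lhom_ext fun t r => ?_
  simp only [LinearMap.add_apply, LinearMap.comp_apply, cone₁, cone₂, linearCombination_single,
    bdry2_single, map_smul, bdry3_single, map_sub, map_add, LinearMap.id_apply]
  rw [← smul_add, ← smul_single_one t r]
  congr 1
  simp only [one_smul]
  abel

lemma bdry2_cone₁_of_bdry1_eq_zero (v : V) {c : C1 V} (hc : bdry1 c = 0) :
    bdry2 (cone₁ v c) = c := by
  simpa [hc] using bdry2_cone₁_add_cone₀_bdry1 v c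

lemma l1_cone₁_le (v : V) (c : C1 V) : l1 (cone₁ v c) ≤ l1 c :=
  (l1_linearCombination_le_mul fun _ _ => (l1_single _ _).trans_le (abs_one.le)).trans_eq
    (one_mul _)

lemma cocycle_eq_of_bdry2_eq [Nonempty V] {W : Type*} [AddCommGroup W] [Module ℝ W]
    {f : C2 V →ₗ[ℝ] W} (hf : ∀ a : C3 V, f (bdry3 a) = 0) {a a' : C2 V}
    (h : bdry2 a = bdry2 a') : f a = f a' := by
  have h0 : bdry2 (a - a') = 0 := by rw [map_sub, h, sub_self]
  have := bdry3_cone₂_add_cone₁_bdry2 (Classical.arbitrary V) (a - a')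
  rw [h0, map_zero, add_zero] at this
  rw [← sub_eq_zero, ← map_sub, ← this, hf]

end Boundary

section Walks

variable {G : SimpleGraph V}

def C2R (G : SimpleGraph V) (R : ℕ) : Submodule ℝ (C2 V) :=
  supported ℝ ℝ {t | pairOK G R t.1 t.2.1 ∧ pairOK G R t.1 t.2.2 ∧ pairOK G R t.2.1 t.2.2}

lemma mem_C2R_iff {R : ℕ} {c : C2 V} : c ∈ C2R G R ↔ memC2R G R c := Iff.rfl

lemma C2R_mono {R R' : ℕ} (h : R ≤ R') : C2R G R ≤ C2R G R' :=
  supported_mono fun _ ⟨h1, h2, h3⟩ =>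
    ⟨⟨h1.1, h1.2.trans h⟩, ⟨h2.1, h2.2.trans h⟩, ⟨h3.1, h3.2.trans h⟩⟩

lemma single_mem_C2R (hconn : G.Connected) {R : ℕ} {x y z : V} (hxy : G.dist x y ≤ R)
    (hxz : G.dist x z ≤ R) (hyz : G.dist y z ≤ R) (r : ℝ) : single (x, y, z) r ∈ C2R G R :=
  single_mem_supported ℝ r ⟨⟨hconn x y, hxy⟩, ⟨hconn x z, hxz⟩, ⟨hconn y z, hyz⟩⟩

lemma cone₁_mem_C2R (hconn : G.Connected) {R : ℕ} {v : V} {c : C1 V}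
    (hc : ∀ t ∈ c.support, G.dist v t.1 ≤ R ∧ G.dist v t.2 ≤ R ∧ G.dist t.1 t.2 ≤ R) :
    cone₁ v c ∈ C2R G R := by
  rw [cone₁, linearCombination_apply]
  exact Submodule.sum_mem _ fun t ht =>
    Submodule.smul_mem _ _ (single_mem_C2R hconn (hc t ht).1 (hc t ht).2.1 (hc t ht).2.2 1)

@[simp] lemma walkChain_nil {x : V} : walkChain G (Walk.nil : G.Walk x x) = 0 := by
  simp [walkChain]

lemma walkChain_cons {x y z : V} (h : G.Adj x y) (p : G.Walk y z) :
    walkChain G (Walk.cons h p) = single (x, y) 1 + walkChain G p := by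
  simp [walkChain]

lemma walkChain_append {x y z : V} (p : G.Walk x y) (q : G.Walk y z) :
    walkChain G (p.append q) = walkChain G p + walkChain G q := by
  simp [walkChain, Walk.darts_append]

lemma walkChain_apply [DecidableEq V] {x y : V} (p : G.Walk x y) (t : V × V) :
    walkChain G p t = (p.darts.map Dart.toProd).count t := by
  induction p with
  | nil => simp
  | cons h p ih =>
    rw [walkChain_cons, Finsupp.add_apply, ih, single_apply]
    simp [List.count_cons, add_comm]

lemma walkChain_apply_of_mem {x y : V} {p : G.Walk x y} (hp : (p.darts.map Dart.toProd).Nodup)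
    {t : V × V} (ht : t ∈ p.darts.map Dart.toProd) : walkChain G p t = 1 := by
  classical
  simp [walkChain_apply, List.count_eq_one_of_mem hp ht]

lemma walkChain_apply_of_notMem {x y : V} {p : G.Walk x y} {t : V × V}
    (ht : t ∉ p.darts.map Dart.toProd) : walkChain G p t = 0 := by
  classical
  simp [walkChain_apply, List.count_eq_zero.mpr ht]

lemma walkChain_nonneg {x y : V} (p : G.Walk x y) (t : V × V) : 0 ≤ walkChain G p t := by
  classical
  rw [walkChain_apply]
  positivity

lemma l1_walkChain {x y : V} (p : G.Walk x y) : l1 (walkChain G p) = p.length := by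
  induction p with
  | nil => simp
  | cons h p ih =>
    rw [walkChain_cons, l1_add_of_nonneg (fun _ => single_nonneg.mpr zero_le_one _)
      (walkChain_nonneg p), ih]
    simp [add_comm]

lemma bdry1_walkChain {x y : V} (p : G.Walk x y) :
    bdry1 (walkChain G p) = single y 1 - single x 1 := by
  induction p with
  | nil => simp
  | cons h p ih =>
    rw [walkChain_cons, map_add, ih, bdry1_single, one_smul]
    abel

lemma mem_support_walkChain {x y : V} {p : G.Walk x y} {t : V × V}
    (ht : t ∈ (walkChain G p).support) :
    G.Adj t.1 t.2 ∧ t.1 ∈ p.support ∧ t.2 ∈ p.support := by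
  classical
  rw [mem_support_iff, walkChain_apply, Ne, Nat.cast_eq_zero, List.count_eq_zero, not_not,
    List.mem_map] at ht
  obtain ⟨d, hd, rfl⟩ := ht
  exact ⟨d.adj, p.dart_fst_mem_support_of_mem_darts hd, p.dart_snd_mem_support_of_mem_darts hd⟩

lemma dist_le_length_of_mem_support {x y w : V} (p : G.Walk x y) (hw : w ∈ p.support) :
    G.dist x w ≤ p.length := by
  classical
  exact (dist_le (p.takeUntil w hw)).trans (p.length_takeUntil_le_length hw)

lemma dist_le_of_mem_support_walkChain {x y : V} (p : G.Walk x y) {t : V × V}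
    (ht : t ∈ (walkChain G p).support) :
    G.dist x t.1 ≤ p.length ∧ G.dist x t.2 ≤ p.length ∧ G.dist t.1 t.2 ≤ 1 := by
  obtain ⟨hadj, h1, h2⟩ := mem_support_walkChain ht
  exact ⟨dist_le_length_of_mem_support p h1, dist_le_length_of_mem_support p h2,
    (dist_eq_one_iff_adj.mpr hadj).le⟩

end Walks

section Hyperbolic

variable {G : SimpleGraph V}

def IsLocallyGeodesic {x y : V} (p : G.Walk x y) (k : ℕ) : Prop :=
  ∀ i j, i ≤ j → j ≤ p.length → j - i ≤ k → G.dist (p.getVert i) (p.getVert j) = j - i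

lemma dist_getVert_le {x y : V} (p : G.Walk x y) {i j : ℕ} (hij : i ≤ j) :
    G.dist (p.getVert i) (p.getVert j) ≤ j - i := by
  have e : (p.drop i).getVert (j - i) = p.getVert j := by
    rw [Walk.drop_getVert, Nat.add_sub_cancel' hij]
  calc G.dist (p.getVert i) (p.getVert j) ≤ ((p.drop i).take (j - i)).length := e ▸ dist_le _
    _ ≤ j - i := by rw [Walk.take_length]; exact min_le_left _ _

lemma IsLocallyGeodesic.take {x y : V} {p : G.Walk x y} {k : ℕ} (hp : IsLocallyGeodesic p k)
    {m : ℕ} (hm : m ≤ p.length) : IsLocallyGeodesic (p.take m) k := by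
  intro i j hij hj hjk
  rw [Walk.take_length, min_eq_left hm] at hj
  rw [Walk.take_getVert, Walk.take_getVert, min_eq_right (hij.trans hj), min_eq_right hj]
  exact hp i j hij (hj.trans hm) hjk

lemma dist_add_dist_of_mem_support (hconn : G.Connected) {x y w : V} {p : G.Walk x y}
    (hp : IsGeodesicWalk G p) (hw : w ∈ p.support) : G.dist x w + G.dist w y = G.dist x y := by
  classical
  have hlen : (p.takeUntil w hw).length + (p.dropUntil w hw).length = p.length := by
    rw [← Walk.length_append, p.take_spec hw]
  have h1 := dist_le (p.takeUntil w hw)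
  have h2 := dist_le (p.dropUntil w hw)
  have h3 : G.dist x y ≤ G.dist x w + G.dist w y := hconn.dist_triangle
  rw [IsGeodesicWalk] at hp
  omega

lemma dist_add_two_le_of_slim (hconn : G.Connected) {δ : ℕ} (hslim : SlimTriangles G δ)
    (x : V) {s y m : V} {σ : G.Walk s y} (hσ : IsGeodesicWalk G σ) (hm : m ∈ σ.support)
    (hsm : 2*δ+2 ≤ G.dist s m) (hmy : 2*δ+2 ≤ G.dist m y) :
    G.dist x m + 2 ≤ G.dist x s ∨ G.dist x m + 2 ≤ G.dist x y := by
  obtain ⟨β, hβ⟩ := hconn.exists_walk_length_eq_dist x s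
  obtain ⟨γ, hγ⟩ := hconn.exists_walk_length_eq_dist x y
  obtain ⟨w, hw, hmw⟩ := (hslim x s y β σ γ hβ hσ hγ).2.1 m hm
  have hxm := hconn.dist_triangle (u := x) (v := w) (w := m)
  rw [SimpleGraph.dist_comm (u := w)] at hxm
  rcases hw with hwβ | hwγ
  · have hsplit := dist_add_dist_of_mem_support hconn hβ hwβ
    have hsw := hconn.dist_triangle (u := s) (v := w) (w := m)
    rw [SimpleGraph.dist_comm (u := s) (v := w), SimpleGraph.dist_comm (u := w) (v := m)] at hsw
    omega
  · have hsplit := dist_add_dist_of_mem_support hconn hγ hwγ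
    have hwy := hconn.dist_triangle (u := m) (v := w) (w := y)
    omega

lemma IsLocallyGeodesic.dist_getVert_lt (hconn : G.Connected) {δ : ℕ}
    (hslim : SlimTriangles G δ) {x y : V} {p : G.Walk x y} (hp : IsLocallyGeodesic p (4*δ+4))
    (hn : 2*δ+2 ≤ p.length) : G.dist x (p.getVert (p.length - (2*δ+2))) < G.dist x y := by
  induction hlen : p.length using Nat.strong_induction_on generalizing y with
  | _ n ih =>
  subst hlen
  set a := 2*δ+2
  have hy : p.getVert p.length = y := p.getVert_length
  by_cases hsmall : p.length ≤ 4*δ+4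
  · have hxy := hp 0 p.length (Nat.zero_le _) le_rfl (by omega)
    have hxm := hp 0 (p.length - a) (Nat.zero_le _) (by omega) (by omega)
    rw [Walk.getVert_zero, hy] at hxy
    rw [Walk.getVert_zero] at hxm
    omega
  set t := p.length - 2*a
  set m := p.length - a
  have hσ : IsGeodesicWalk G (p.drop t) := by
    have := hp t p.length (by omega) le_rfl (by omega)
    rw [hy] at this
    rw [IsGeodesicWalk, Walk.drop_length, this]
  have hmσ : p.getVert m ∈ (p.drop t).support := by
    have : (p.drop t).getVert a = p.getVert m := by rw [Walk.drop_getVert]; congr 1; omega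
    exact this ▸ Walk.getVert_mem_support _ _
  have htm : G.dist (p.getVert t) (p.getVert m) = a := by
    rw [hp t m (by omega) (by omega) (by omega)]; omega
  have hmy : G.dist (p.getVert m) y = a := by
    have := hp m p.length (by omega) le_rfl (by omega)
    rw [hy] at this
    omega
  rcases dist_add_two_le_of_slim hconn hslim x hσ hmσ htm.ge hmy.ge with h | h
  · -- impossible: by induction, along the prefix `p.take m` the distance to `x` increases
    have hlt := ih m (by omega) (hp.take (m := m) (by omega)) (by rw [Walk.take_length]; omega)
      (by rw [Walk.take_length]; omega)
    rw [Walk.take_getVert, min_eq_right (by omega), show m - a = t by omega] at hlt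
    omega
  · omega

lemma not_isLocallyGeodesic_of_closed (hconn : G.Connected) {δ : ℕ} (hslim : SlimTriangles G δ)
    {x : V} {p : G.Walk x x} (hp : 0 < p.length) : ¬ IsLocallyGeodesic p (4*δ+4) := by
  intro hgeo
  by_cases hn : 2*δ+2 ≤ p.length
  · simpa using hgeo.dist_getVert_lt hconn hslim hn
  · have := hgeo 0 p.length (Nat.zero_le _) le_rfl (by omega)
    rw [Walk.getVert_zero, Walk.getVert_length, dist_self] at this
    omega

lemma exists_shortcut (hconn : G.Connected) {δ : ℕ} (hslim : SlimTriangles G δ) {x : V}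
    {p : G.Walk x x} (hp : 0 < p.length) :
    ∃ (u v : V) (pre : G.Walk x u) (win : G.Walk u v) (suf : G.Walk v x),
      p = pre.append (win.append suf) ∧ win.length ≤ 4*δ+4 ∧ G.dist u v < win.length := by
  obtain ⟨i, j, hij, hj, hk, hne⟩ : ∃ i j, i ≤ j ∧ j ≤ p.length ∧ j - i ≤ 4*δ+4 ∧
      G.dist (p.getVert i) (p.getVert j) ≠ j - i := by
    simpa [IsLocallyGeodesic] using not_isLocallyGeodesic_of_closed hconn hslim hp
  have hwin : ((p.drop i).take (j - i)).length = j - i := by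
    rw [Walk.take_length, Walk.drop_length]; omega
  refine ⟨_, _, p.take i, (p.drop i).take (j - i), (p.drop i).drop (j - i), by
    rw [Walk.append_take_drop_eq, Walk.append_take_drop_eq], by omega, ?_⟩
  rw [hwin, Walk.drop_getVert, Nat.add_sub_cancel' hij]
  exact lt_of_le_of_ne (dist_getVert_le p hij) hne

theorem exists_fill_walkChain_of_closed (hconn : G.Connected) {δ : ℕ}
    (hslim : SlimTriangles G δ) {x : V} (p : G.Walk x x) :
    ∃ a ∈ C2R G (4*δ+4), bdry2 a = walkChain G p ∧ l1 a ≤ (8*δ+8) * p.length := by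
  induction hlen : p.length using Nat.strong_induction_on generalizing x with
  | _ n ih =>
  subst hlen
  rcases Nat.eq_zero_or_pos p.length with h0 | hpos
  · refine ⟨0, zero_mem _, ?_, by simp [h0]⟩
    rw [map_zero, eq_comm]
    exact eq_zero_of_l1_eq_zero (by rw [l1_walkChain, h0, Nat.cast_zero])
  obtain ⟨u, v, pre, win, suf, rfl, hwin, hshort⟩ := exists_shortcut hconn hslim hpos
  obtain ⟨q, hq⟩ := hconn.exists_walk_length_eq_dist u v
  have hlen : (pre.append (q.append suf)).length + 1 ≤ (pre.append (win.append suf)).length := by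
    simp only [Walk.length_append]; omega
  obtain ⟨a', ha'mem, ha', hla'⟩ := ih _ (by omega) (pre.append (q.append suf)) rfl
  -- the shortcut replaces `win` by `q`; the loop `win - q` is filled by a cone at `u`
  have hloop : bdry1 (walkChain G win - walkChain G q) = 0 := by
    rw [map_sub, bdry1_walkChain, bdry1_walkChain, sub_self]
  refine ⟨a' + cone₁ u (walkChain G win - walkChain G q), add_mem ha'mem ?_, ?_, ?_⟩
  · refine cone₁_mem_C2R hconn fun t ht => ?_
    classical
    rcases Finset.mem_union.mp (support_sub ht) with h | h
    · have := dist_le_of_mem_support_walkChain win h; omega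
    · have := dist_le_of_mem_support_walkChain q h; omega
  · rw [map_add, ha', bdry2_cone₁_of_bdry1_eq_zero _ hloop]
    simp only [walkChain_append]
    abel
  · have hcone := (l1_cone₁_le u _).trans (l1_sub_le (walkChain G win) (walkChain G q))
    rw [l1_walkChain, l1_walkChain] at hcone
    have hlen' : ((pre.append (q.append suf)).length : ℝ) + 1 ≤
        (pre.append (win.append suf)).length := by exact_mod_cast hlen
    have hwq : (win.length : ℝ) + q.length ≤ 8*δ+8 := by
      exact_mod_cast (by omega : win.length + q.length ≤ 8*δ+8)
    calc l1 (a' + cone₁ u (walkChain G win - walkChain G q))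
        ≤ (8*δ+8) * (pre.append (q.append suf)).length + (8*δ+8) := by
          refine (l1_add_le _ _).trans ?_
          linarith
      _ ≤ (8*δ+8) * (pre.append (win.append suf)).length := by nlinarith

end Hyperbolic

section Cycles

variable {G : SimpleGraph V}

lemma exists_mem_support_of_nonneg_of_bdry1_eq_zero {N : C1 V} (hN : ∀ t, 0 ≤ N t)
    (hcyc : bdry1 N = 0) {t : V × V} (ht : t ∈ N.support) : ∃ w, (t.2, w) ∈ N.support := by
  classical
  by_contra! hno
  have hv : bdry1 N t.2 = ∑ s ∈ N.support, if s.2 = t.2 then N s else 0 := by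
    rw [bdry1, lsum_apply, Finsupp.sum, Finsupp.finsetSum_apply]
    refine Finset.sum_congr rfl fun s hs => ?_
    have : s.1 ≠ t.2 := fun h => hno s.2 (by rwa [← h])
    simp [single_apply, this, eq_comm]
  have hpos : 0 < bdry1 N t.2 := by
    rw [hv]
    refine lt_of_lt_of_le ?_ (Finset.single_le_sum (f := fun s => if s.2 = t.2 then N s else 0)
      (fun s _ => by split_ifs <;> simp [hN]) ht)
    simpa using lt_of_le_of_ne (hN t) (Ne.symm (mem_support_iff.mp ht))
  simp [hcyc] at hpos

lemma exists_closedWalk_of_seq {P : V × V → Prop} (u : ℕ → V)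
    (hadj : ∀ k, G.Adj (u k) (u (k+1))) (hP : ∀ k, P (u k, u (k+1))) {i j : ℕ} (hij : i < j)
    (heq : u i = u j) :
    ∃ (x : V) (c : G.Walk x x), 0 < c.length ∧ ∀ d ∈ c.darts, P d.toProd := by
  have key : ∀ n, ∃ p : G.Walk (u i) (u (i + n)),
      p.length = n ∧ ∀ d ∈ p.darts, P d.toProd := by
    intro n
    induction n with
    | zero => exact ⟨Walk.nil, rfl, by simp⟩
    | succ n ih =>
      obtain ⟨p, hl, hd⟩ := ih
      refine ⟨p.concat (hadj (i + n)), by simp [hl], fun d hdm => ?_⟩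
      rw [Walk.darts_concat, List.concat_eq_append, List.mem_append, List.mem_singleton] at hdm
      rcases hdm with h | rfl
      · exact hd d h
      · exact hP _
  obtain ⟨p, hl, hd⟩ := key (j - i)
  have hend : u (i + (j - i)) = u i := by rw [Nat.add_sub_cancel' hij.le, heq]
  exact ⟨u i, p.copy rfl hend, by simp [hl, hij], by simpa using hd⟩

lemma exists_closedWalk_of_forall_exists_succ {P : V × V → Prop}
    (hadj : ∀ t, P t → G.Adj t.1 t.2) (hfin : {t | P t}.Finite)
    (hsucc : ∀ t, P t → ∃ w, P (t.2, w)) {t₀ : V × V} (ht₀ : P t₀) :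
    ∃ (x : V) (c : G.Walk x x), 0 < c.length ∧ ∀ d ∈ c.darts, P d.toProd := by
  have : Nonempty V := ⟨t₀.1⟩
  choose! s hs using hsucc
  set e : ℕ → V × V := fun n => (fun t => (t.2, s t))^[n] t₀
  have he : ∀ n, e (n+1) = ((e n).2, s (e n)) := fun n => Function.iterate_succ_apply' _ _ _
  have hPe : ∀ n, P (e n) := by
    intro n
    induction n with
    | zero => exact ht₀
    | succ n ih => rw [he]; exact hs _ ih
  have hpair : ∀ n, ((e n).1, (e (n+1)).1) = e n := fun n => by rw [he]
  obtain ⟨i, j, hij, heq⟩ := hfin.exists_lt_map_eq_of_forall_mem hPe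
  exact exists_closedWalk_of_seq (fun n => (e n).1) (fun k => hadj _ (hpair k ▸ hPe k))
    (fun k => hpair k ▸ hPe k) hij (congrArg Prod.fst heq)

lemma exists_closedWalk_nodup_darts {P : V × V → Prop} {x : V} {c : G.Walk x x}
    (hc : 0 < c.length) (hP : ∀ d ∈ c.darts, P d.toProd) :
    ∃ (y : V) (c' : G.Walk y y), 0 < c'.length ∧ (c'.darts.map Dart.toProd).Nodup ∧
      ∀ d ∈ c'.darts, P d.toProd := by
  classical
  cases c with
  | nil => simp at hc
  | cons h p =>
    -- shortcutting the tail to a path makes the second endpoints of the darts distinct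
    refine ⟨x, Walk.cons h p.bypass, by simp, ?_, fun d hd => ?_⟩
    · refine List.Nodup.of_map Prod.snd ?_
      rw [List.map_map]
      simpa [Function.comp_def, Walk.map_snd_darts] using (p.bypass_isPath).support_nodup
    · rcases List.mem_cons.mp (by simpa using hd) with rfl | hd
      · exact hP _ (by simp)
      · exact hP d (List.mem_cons_of_mem _ (p.darts_bypass_subset_darts hd))

lemma exists_closedWalk_of_nonneg_cycle {N : C1 V} (hN : ∀ t, 0 ≤ N t) (hcyc : bdry1 N = 0)
    (hadj : ∀ t ∈ N.support, G.Adj t.1 t.2) (hne : N ≠ 0) :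
    ∃ (x : V) (c : G.Walk x x), 0 < c.length ∧ (c.darts.map Dart.toProd).Nodup ∧
      ∀ d ∈ c.darts, d.toProd ∈ N.support := by
  obtain ⟨t₀, ht₀⟩ := support_nonempty_iff.mpr hne
  obtain ⟨x, c, hc, hP⟩ := exists_closedWalk_of_forall_exists_succ (P := (· ∈ N.support))
    hadj N.support.finite_toSet
    (fun t ht => exists_mem_support_of_nonneg_of_bdry1_eq_zero hN hcyc ht) ht₀
  exact exists_closedWalk_nodup_darts hc hP

end Cycles

section CycleFilling

variable {G : SimpleGraph V}

lemma exists_peel_closedWalk {N : C1 V} (hN : ∀ t, 0 ≤ N t) {x : V} {c : G.Walk x x}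
    (hc : 0 < c.length) (hnodup : (c.darts.map Dart.toProd).Nodup)
    (hsupp : ∀ d ∈ c.darts, d.toProd ∈ N.support) :
    ∃ ε > 0, (∀ t, 0 ≤ (N - ε • walkChain G c) t) ∧
      (N - ε • walkChain G c).support.card < N.support.card ∧
      l1 (N - ε • walkChain G c) = l1 N - ε * c.length := by
  classical
  have hne : c.darts.toFinset.Nonempty := by
    rw [List.toFinset_nonempty_iff, Ne, ← List.length_eq_zero_iff, Walk.length_darts]
    omega
  obtain ⟨d₀, hd₀, hmin⟩ := c.darts.toFinset.exists_min_image (fun d => N d.toProd) hne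
  rw [List.mem_toFinset] at hd₀
  -- the dart of `c` on which `N` is least leaves the support of `N - ε • walkChain G c`
  set ε := N d₀.toProd
  have hε : 0 < ε := lt_of_le_of_ne (hN _) (Ne.symm (mem_support_iff.mp (hsupp d₀ hd₀)))
  have hle : ∀ t, (ε • walkChain G c) t ≤ N t := by
    intro t
    rw [Finsupp.smul_apply, smul_eq_mul]
    by_cases ht : t ∈ c.darts.map Dart.toProd
    · obtain ⟨d, hd, rfl⟩ := List.mem_map.mp ht
      rw [walkChain_apply_of_mem hnodup ht, mul_one]
      exact hmin d (List.mem_toFinset.mpr hd)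
    · simpa [walkChain_apply_of_notMem ht] using hN t
  have hnn : ∀ t, 0 ≤ (ε • walkChain G c) t := fun t =>
    by simpa using mul_nonneg hε.le (walkChain_nonneg c t)
  refine ⟨ε, hε, fun t => by simpa using hle t, ?_, ?_⟩
  · refine Finset.card_lt_card ⟨fun t ht => ?_, fun h => ?_⟩
    · by_contra hN0
      rw [notMem_support_iff] at hN0
      have := hle t
      have := hnn t
      exact mem_support_iff.mp ht (by rw [Finsupp.sub_apply]; linarith)
    · have h₀ := h (hsupp d₀ hd₀)
      rw [mem_support_iff, Finsupp.sub_apply, Finsupp.smul_apply,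
        walkChain_apply_of_mem hnodup (List.mem_map_of_mem hd₀)] at h₀
      simp [ε] at h₀
  · rw [l1_sub_of_le hnn hle, l1_smul, l1_walkChain, abs_of_pos hε]

theorem exists_fill_of_nonneg_cycle (hconn : G.Connected) {δ : ℕ} (hslim : SlimTriangles G δ)
    {N : C1 V} (hN : ∀ t, 0 ≤ N t) (hcyc : bdry1 N = 0)
    (hadj : ∀ t ∈ N.support, G.Adj t.1 t.2) :
    ∃ a ∈ C2R G (4*δ+4), bdry2 a = N ∧ l1 a ≤ (8*δ+8) * l1 N := by
  induction hcard : N.support.card using Nat.strong_induction_on generalizing N with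
  | _ n ih =>
  subst hcard
  by_cases hN0 : N = 0
  · exact ⟨0, zero_mem _, by simp [hN0], by simp [hN0]⟩
  obtain ⟨x, c, hc, hnodup, hsupp⟩ := exists_closedWalk_of_nonneg_cycle hN hcyc hadj hN0
  obtain ⟨ε, hε, hN', hcard, hl1⟩ := exists_peel_closedWalk hN hc hnodup hsupp
  have hcyc' : bdry1 (N - ε • walkChain G c) = 0 := by
    rw [map_sub, map_smul, bdry1_walkChain, hcyc, sub_self, smul_zero, sub_zero]
  have hadj' : ∀ t ∈ (N - ε • walkChain G c).support, G.Adj t.1 t.2 := by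
    intro t ht
    classical
    rcases Finset.mem_union.mp (support_sub ht) with h | h
    · exact hadj t h
    · exact (mem_support_walkChain (support_smul h)).1
  obtain ⟨a', ha'mem, ha', hla'⟩ := ih _ hcard hN' hcyc' hadj' rfl
  obtain ⟨b, hbmem, hb, hlb⟩ := exists_fill_walkChain_of_closed hconn hslim c
  refine ⟨a' + ε • b, add_mem ha'mem (Submodule.smul_mem _ _ hbmem), ?_, ?_⟩
  · rw [map_add, map_smul, ha', hb, sub_add_cancel]
  · calc l1 (a' + ε • b)
        ≤ (8*δ+8) * l1 (N - ε • walkChain G c) + ε * ((8*δ+8) * c.length) := by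
          refine (l1_add_le _ _).trans (add_le_add hla' ?_)
          rw [l1_smul, abs_of_pos hε]
          exact mul_le_mul_of_nonneg_left hlb hε.le
      _ = (8*δ+8) * l1 N := by rw [hl1]; ring

noncomputable def bigon (t : V × V) : C2 V := single (t.1, t.1, t.2) 1 + single (t.1, t.2, t.1) 1

lemma bdry2_bigon (t : V × V) : bdry2 (bigon t) = single t 1 + single t.swap 1 := by
  simp only [bigon, map_add, bdry2_single, one_smul]
  abel

lemma bigon_mem_C2R (hconn : G.Connected) {t : V × V} (ht : G.Adj t.1 t.2) :
    bigon t ∈ C2R G 1 := by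
  have h12 := (dist_eq_one_iff_adj.mpr ht).le
  have h21 := (dist_eq_one_iff_adj.mpr ht.symm).le
  have h11 : G.dist t.1 t.1 ≤ 1 := by simp
  exact add_mem (single_mem_C2R hconn h11 h12 h12 _) (single_mem_C2R hconn h12 h11 h21 _)

lemma bdry2_linearCombination_bigon (c : C1 V) :
    bdry2 (linearCombination ℝ bigon c) = c + mapDomain Prod.swap c := by
  rw [apply_linearCombination, linearCombination_apply]
  simp only [Function.comp_apply, bdry2_bigon, smul_add, smul_single_one]
  rw [sum_add, sum_single]
  rfl

lemma exists_bigons_sub_nonneg (hconn : G.Connected) {z : C1 V}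
    (hadj : ∀ t ∈ z.support, G.Adj t.1 t.2) :
    ∃ B ∈ C2R G 1, l1 B ≤ 2 * l1 z ∧ (∀ t, 0 ≤ (z - bdry2 B) t) ∧
      l1 (z - bdry2 B) ≤ 3 * l1 z ∧ ∀ t ∈ (z - bdry2 B).support, G.Adj t.1 t.2 := by
  classical
  -- subtracting the bigons over the negative part of `z` reverses its negative edges
  set zneg := z.filter (fun t => z t < 0)
  have hlzneg : l1 zneg ≤ l1 z := l1_filter_le _ z
  have happ : ∀ t,
      (z - bdry2 (linearCombination ℝ bigon zneg)) t = z t - zneg t - zneg t.swap := by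
    intro t
    rw [bdry2_linearCombination_bigon, Finsupp.sub_apply, Finsupp.add_apply,
      ← mapDomain_apply Prod.swap_injective zneg t.swap, Prod.swap_swap, sub_sub]
  refine ⟨linearCombination ℝ bigon zneg, ?_, ?_, fun t => ?_, ?_, fun t ht => ?_⟩
  · rw [linearCombination_apply]
    exact Submodule.sum_mem _ fun t ht =>
      Submodule.smul_mem _ _ (bigon_mem_C2R hconn (hadj t (Finset.mem_filter.mp ht).1))
  · have h2 : ∀ t ∈ zneg.support, l1 (bigon t) ≤ 2 := fun t _ =>
      (l1_add_le _ _).trans (by norm_num)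
    linarith [l1_linearCombination_le_mul h2]
  · rw [happ]
    simp only [zneg, filter_apply]
    split_ifs <;> linarith
  · rw [bdry2_linearCombination_bigon]
    linarith [l1_sub_le z (zneg + mapDomain Prod.swap zneg),
      l1_add_le zneg (mapDomain Prod.swap zneg), l1_mapDomain_le Prod.swap zneg]
  · by_contra hnadj
    have h1 : z t = 0 := notMem_support_iff.mp fun h => hnadj (hadj t h)
    have h2 : z t.swap = 0 := notMem_support_iff.mp fun h => hnadj (hadj _ h).symm
    exact mem_support_iff.mp ht (by simp [happ, zneg, h1, h2])

theorem exists_fill_of_cycle (hconn : G.Connected) {δ : ℕ} (hslim : SlimTriangles G δ)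
    {z : C1 V} (hcyc : bdry1 z = 0) (hadj : ∀ t ∈ z.support, G.Adj t.1 t.2) :
    ∃ a ∈ C2R G (4*δ+4), bdry2 a = z ∧ l1 a ≤ (24*δ+26) * l1 z := by
  obtain ⟨B, hBmem, hlB, hN, hlN, hadjN⟩ := exists_bigons_sub_nonneg hconn hadj
  have hcycN : bdry1 (z - bdry2 B) = 0 := by rw [map_sub, hcyc, bdry1_bdry2, sub_zero]
  obtain ⟨a, ha, hab, hla⟩ := exists_fill_of_nonneg_cycle hconn hslim hN hcycN hadjN
  refine ⟨a + B, add_mem ha (C2R_mono (by omega) hBmem),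
    by rw [map_add, hab, sub_add_cancel], ?_⟩
  calc l1 (a + B) ≤ (8*δ+8) * (3 * l1 z) + 2 * l1 z :=
        (l1_add_le _ _).trans (add_le_add (hla.trans (by gcongr)) hlB)
    _ = (24*δ+26) * l1 z := by ring

end CycleFilling

section Cochains

variable {G : SimpleGraph V} {W : Type*} [NormedAddCommGroup W] [NormedSpace ℝ W]

/-- The norm `|f|_∞^R` of a 2-cochain restricted to `C₂^R`. -/
noncomputable def cochainNorm (G : SimpleGraph V) (f : C2 V →ₗ[ℝ] W) (R : ℕ) : ℝ :=
  sInf {M : ℝ | 0 ≤ M ∧ ∀ c ∈ C2R G R, ‖f c‖ ≤ M * l1 c}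

lemma cochainNorm_nonneg (f : C2 V →ₗ[ℝ] W) (R : ℕ) : 0 ≤ cochainNorm G f R :=
  Real.sInf_nonneg fun _ h => h.1

lemma cochainNorm_le {f : C2 V →ₗ[ℝ] W} {R : ℕ} {M : ℝ} (h0 : 0 ≤ M)
    (hM : ∀ c ∈ C2R G R, ‖f c‖ ≤ M * l1 c) : cochainNorm G f R ≤ M :=
  csInf_le ⟨0, fun _ h => h.1⟩ ⟨h0, hM⟩

lemma cochainNorm_set_nonempty {f : C2 V →ₗ[ℝ] W} (hf : Bdd2 G f) (R : ℕ) :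
    {M : ℝ | 0 ≤ M ∧ ∀ c ∈ C2R G R, ‖f c‖ ≤ M * l1 c}.Nonempty := by
  obtain ⟨M, hM⟩ := hf R
  exact ⟨max M 0, le_max_right _ _, fun c hc =>
    (hM c (mem_C2R_iff.mp hc)).trans (mul_le_mul_of_nonneg_right (le_max_left _ _) (l1_nonneg c))⟩

lemma norm_le_cochainNorm_mul {f : C2 V →ₗ[ℝ] W} (hf : Bdd2 G f) {R : ℕ} {c : C2 V}
    (hc : c ∈ C2R G R) : ‖f c‖ ≤ cochainNorm G f R * l1 c := by
  rcases (l1_nonneg c).eq_or_lt with h0 | hpos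
  · simp [eq_zero_of_l1_eq_zero h0.symm]
  · rw [← div_le_iff₀ hpos]
    exact le_csInf (cochainNorm_set_nonempty hf R) fun M hM => (div_le_iff₀ hpos).mpr (hM.2 c hc)

lemma cochainNorm_mono {f : C2 V →ₗ[ℝ] W} (hf : Bdd2 G f) {R R' : ℕ} (h : R ≤ R') :
    cochainNorm G f R ≤ cochainNorm G f R' :=
  le_csInf (cochainNorm_set_nonempty hf R') fun _ hM =>
    cochainNorm_le hM.1 fun c hc => hM.2 c (C2R_mono h hc)

lemma exists_fill_single_sub_geodesic (hconn : G.Connected) (t : V × V) {R : ℕ}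
    (hR : G.dist t.1 t.2 ≤ R) (h1 : 1 ≤ R) :
    ∃ (F : C2 V) (γ : C1 V), bdry2 F = single t 1 - γ ∧ F ∈ C2R G R ∧ l1 F ≤ R + 1 ∧
      l1 γ ≤ R ∧ ∀ s ∈ γ.support, G.Adj s.1 s.2 := by
  classical
  obtain ⟨p, hp⟩ := hconn.exists_walk_length_eq_dist t.1 t.2
  have hcyc : bdry1 (single t 1 - walkChain G p) = 0 := by
    rw [map_sub, bdry1_single, bdry1_walkChain, one_smul, sub_self]
  refine ⟨cone₁ t.1 (single t 1 - walkChain G p), walkChain G p,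
    bdry2_cone₁_of_bdry1_eq_zero _ hcyc, cone₁_mem_C2R hconn fun s hs => ?_, ?_, ?_,
    fun s hs => (mem_support_walkChain hs).1⟩
  · rcases Finset.mem_union.mp (support_sub hs) with h | h
    · obtain rfl := Finset.mem_singleton.mp (support_single_subset h)
      simp [hR]
    · have := dist_le_of_mem_support_walkChain p h
      omega
  · refine (l1_cone₁_le _ _).trans ((l1_sub_le _ _).trans ?_)
    rw [l1_single, l1_walkChain, abs_one, hp, add_comm]
    exact_mod_cast Nat.add_le_add_right hR 1
  · rw [l1_walkChain, hp]
    exact_mod_cast hR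

noncomputable def pairScale (G : SimpleGraph V) (δ : ℕ) (t : V × V) : ℕ :=
  max (4*δ+4) (G.dist t.1 t.2)

-- `24δ+26` is the constant of `exists_fill_of_cycle`, and straightening a pair of diameter
-- `≤ R` costs a 2-chain of norm `≤ R + 1`.
noncomputable def primitiveBound (δ R : ℕ) (M : ℝ) : ℝ := M * ((24*δ+27) * R + 1)

lemma primitiveBound_le_primitiveBound (δ : ℕ) {R R' : ℕ} {M M' : ℝ} (hR : R ≤ R')
    (hM0 : 0 ≤ M) (hM : M ≤ M') : primitiveBound δ R M ≤ primitiveBound δ R' M' := by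
  unfold primitiveBound
  gcongr
  exact hM0.trans hM

noncomputable def cocycleWeight (G : SimpleGraph V) (f : C2 V →ₗ[ℝ] W) (δ : ℕ)
    (t : V × V) : ℝ :=
  primitiveBound δ (pairScale G δ t) (cochainNorm G f (pairScale G δ t))

lemma cocycleWeight_nonneg (G : SimpleGraph V) (f : C2 V →ₗ[ℝ] W) (δ : ℕ) (t : V × V) :
    0 ≤ cocycleWeight G f δ t :=
  mul_nonneg (cochainNorm_nonneg f _) (by positivity)

lemma cocycleWeight_le {f : C2 V →ₗ[ℝ] W} (hf : Bdd2 G f) {δ R : ℕ} (hR : 4*δ+4 ≤ R)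
    {t : V × V} (ht : G.dist t.1 t.2 ≤ R) :
    cocycleWeight G f δ t ≤ primitiveBound δ R (cochainNorm G f R) :=
  have hs : pairScale G δ t ≤ R := max_le hR ht
  primitiveBound_le_primitiveBound δ hs (cochainNorm_nonneg f _) (cochainNorm_mono hf hs)

lemma exists_straightening (hconn : G.Connected) {f : C2 V →ₗ[ℝ] W} (hf : Bdd2 G f) (δ : ℕ)
    (b : C1 V) :
    ∃ (A : C2 V) (z : C1 V), bdry2 A = b - z ∧ (∀ s ∈ z.support, G.Adj s.1 s.2) ∧
      l1 z ≤ (b.sum fun t r => |r| * pairScale G δ t) ∧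
      ‖f A‖ ≤ b.sum fun t r =>
        |r| * (cochainNorm G f (pairScale G δ t) * (pairScale G δ t + 1)) := by
  classical
  choose F γ hF hFmem hlF hlγ hadjγ using fun t => exists_fill_single_sub_geodesic hconn t
    (le_max_right (4*δ+4) _ : _ ≤ pairScale G δ t) (le_max_of_le_left (by omega))
  refine ⟨linearCombination ℝ F b, linearCombination ℝ γ b, ?_, fun s hs => ?_, ?_, ?_⟩
  · rw [apply_linearCombination, linearCombination_apply, linearCombination_apply]
    simp only [Function.comp_apply, hF, smul_sub, smul_single_one]
    rw [sum_sub, sum_single]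
  · rw [linearCombination_apply] at hs
    obtain ⟨t, -, ht⟩ := mem_support_finsetSum s hs
    exact hadjγ t s (support_smul ht)
  · exact (l1_linearCombination_le γ b).trans
      (Finset.sum_le_sum fun t _ => mul_le_mul_of_nonneg_left (hlγ t) (abs_nonneg _))
  · rw [apply_linearCombination]
    refine (norm_linearCombination_le _ b).trans
      (Finset.sum_le_sum fun t _ => mul_le_mul_of_nonneg_left ?_ (abs_nonneg _))
    exact (norm_le_cochainNorm_mul hf (hFmem t)).trans
      (mul_le_mul_of_nonneg_left (hlF t) (cochainNorm_nonneg _ _))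

theorem norm_cocycle_le (hconn : G.Connected) {δ : ℕ} (hslim : SlimTriangles G δ)
    {f : C2 V →ₗ[ℝ] W} (hf : Bdd2 G f) (hcoc : ∀ a : C3 V, f (bdry3 a) = 0) (a : C2 V) :
    ‖f a‖ ≤ (bdry2 a).sum fun t r => |r| * cocycleWeight G f δ t := by
  have : Nonempty V := hconn.nonempty
  obtain ⟨A, z, hA, hadj, hlz, hfA⟩ := exists_straightening hconn hf δ (bdry2 a)
  have hcyc : bdry1 z = 0 := by
    rw [show z = bdry2 a - bdry2 A by rw [hA, sub_sub_cancel], map_sub, bdry1_bdry2,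
      bdry1_bdry2, sub_self]
  obtain ⟨B, hBmem, hB, hlB⟩ := exists_fill_of_cycle hconn hslim hcyc hadj
  have hfa : f a = f (A + B) :=
    cocycle_eq_of_bdry2_eq hcoc (by rw [map_add, hA, hB, sub_add_cancel])
  have hfB : ‖f B‖ ≤ (bdry2 a).sum fun t r =>
      |r| * (cochainNorm G f (pairScale G δ t) * ((24*δ+26) * pairScale G δ t)) := by
    have hM := cochainNorm_nonneg (G := G) f (4*δ+4)
    calc ‖f B‖ ≤ cochainNorm G f (4*δ+4) * ((24*δ+26) * (bdry2 a).sum fun t r =>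
          |r| * pairScale G δ t) :=
          (norm_le_cochainNorm_mul hf hBmem).trans (mul_le_mul_of_nonneg_left
            (hlB.trans (mul_le_mul_of_nonneg_left hlz (by positivity))) hM)
      _ = (bdry2 a).sum fun t r =>
          |r| * (cochainNorm G f (4*δ+4) * ((24*δ+26) * pairScale G δ t)) := by
          simp only [Finsupp.sum, Finset.mul_sum]
          exact Finset.sum_congr rfl fun _ _ => by ring
      _ ≤ _ := Finset.sum_le_sum fun t _ => mul_le_mul_of_nonneg_left
          (mul_le_mul_of_nonneg_right (cochainNorm_mono hf (le_max_left _ _)) (by positivity))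
          (abs_nonneg _)
  rw [hfa, map_add]
  refine (norm_add_le _ _).trans ((add_le_add hfA hfB).trans (le_of_eq ?_))
  simp only [Finsupp.sum, ← Finset.sum_add_distrib]
  exact Finset.sum_congr rfl fun _ _ => by simp only [cocycleWeight, primitiveBound]; ring

lemma norm_le_norm_weightedEmbedding_bdry2 [DecidableEq V] (hconn : G.Connected) {δ : ℕ}
    (hslim : SlimTriangles G δ) {f : C2 V →ₗ[ℝ] W} (hf : Bdd2 G f)
    (hcoc : ∀ a : C3 V, f (bdry3 a) = 0) (a : C2 V) :
    ‖f a‖ ≤ ‖weightedEmbedding (cocycleWeight G f δ) (bdry2 a)‖ := by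
  rw [norm_weightedEmbedding]
  simpa only [abs_of_nonneg (cocycleWeight_nonneg G f δ _)] using
    norm_cocycle_le hconn hslim hf hcoc a

lemma norm_weightedEmbedding_cocycleWeight_le [DecidableEq V] {f : C2 V →ₗ[ℝ] W}
    (hf : Bdd2 G f) {δ R : ℕ} (hR : 4*δ+4 ≤ R) {c : C1 V}
    (hc : ∀ t ∈ c.support, G.dist t.1 t.2 ≤ R) :
    ‖weightedEmbedding (cocycleWeight G f δ) c‖ ≤
      primitiveBound δ R (cochainNorm G f R) * l1 c :=
  norm_weightedEmbedding_le fun t ht =>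
    (abs_of_nonneg (cocycleWeight_nonneg G f δ t)).trans_le (cocycleWeight_le hf hR (hc t ht))

end Cochains


end HyperbolicH2

open HyperbolicH2

/-- for δ-hyperbolic graphs and 1-injective Banach spaces W,
every bounded 2-cocycle is the coboundary of a bounded 1-cochain, with
quantitative control K(R,|f|) depending only on δ; in particular
H²_{(∞)}(X;W) = 0. -/
theorem hyperbolic_vanishing_H2 :
    ∀ δ : ℕ, ∃ (R₀ : ℕ) (K : ℕ → ℝ → ℝ),
      ∀ (V : Type) (G : SimpleGraph V), G.Connected → SlimTriangles G δ →
      ∀ (W : Type) [NormedAddCommGroup W] [NormedSpace ℝ W] [CompleteSpace W],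
        IsOneInjective W →
        ∀ f : C2 V →ₗ[ℝ] W, Bdd2 G f → (∀ a : C3 V, f (bdry3 a) = 0) →
          ∃ g : C1 V →ₗ[ℝ] W, Bdd1 G g ∧ f = g.comp bdry2 ∧
            ∀ R, R₀ ≤ R → ∀ Mf : ℝ, 0 ≤ Mf →
              (∀ c : C2 V, memC2R G R c → ‖f c‖ ≤ Mf * l1 c) →
              ∀ c : C1 V, memC1R G R c → ‖g c‖ ≤ K R Mf * l1 c := by
  intro δ
  refine ⟨4*δ+4, primitiveBound δ, fun V G hconn hslim W _ _ _ hW f hf hcoc => ?_⟩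
  classical
  set T := weightedEmbedding (cocycleWeight G f δ)
  obtain ⟨ψ, hψ, hψT⟩ := exists_extension_of_isOneInjective hW (T ∘ₗ bdry2) f
    (norm_le_norm_weightedEmbedding_bdry2 hconn hslim hf hcoc)
  have hg : ∀ R, 4*δ+4 ≤ R → ∀ c : C1 V, (∀ t ∈ c.support, G.dist t.1 t.2 ≤ R) →
      ‖ψ (T c)‖ ≤ primitiveBound δ R (cochainNorm G f R) * l1 c := fun R hR c hc =>
    (ψ.le_of_opNorm_le hψ _).trans
      ((one_mul _).trans_le (norm_weightedEmbedding_cocycleWeight_le hf hR hc))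
  refine ⟨ψ.toLinearMap ∘ₗ T, fun R => ?_, LinearMap.ext fun a => (hψT a).symm, ?_⟩
  · exact ⟨_, fun c hc =>
      hg _ (le_max_right R _) c fun t ht => (hc t ht).2.trans (le_max_left _ _)⟩
  · intro R hR Mf hMf0 hMf c hc
    have hM : cochainNorm G f R ≤ Mf :=
      cochainNorm_le hMf0 fun c hc => hMf c (mem_C2R_iff.mp hc)
    exact (hg R hR c fun t ht => (hc t ht).2).trans (mul_le_mul_of_nonneg_right
      (primitiveBound_le_primitiveBound δ le_rfl (cochainNorm_nonneg f R) hM) (l1_nonneg c))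
end

section
/- Let (f,f_#): (X,𝒴) → (X',𝒴') be a relative coarsely uniform map between graphs with collections of pairwise-disjoint subgraphs. Then for every cochain α ∈ C^k_{(∞)}(X',𝒴';V) (vanishing on tuples contained in a member of 𝒴' and bounded on tuples of bounded diameter), the pull-back f*α lies in C^k_{(∞)}(X,𝒴;V). Consequently f induces a map H^•_{(∞)}(X',𝒴';V) → H^•_{(∞)}(X,𝒴;V). -/
open Finsupp

variable {V : Type*}

/-- k-chains: free real vector space on (k+1)-tuples of vertices. -/
abbrev Ck (V : Type*) (k : ℕ) := ((Fin (k + 1) → V) →₀ ℝ)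

/-- A tuple of vertices has diameter at most R. -/
def tupDiamLe (G : SimpleGraph V) {k : ℕ} (R : ℕ) (t : Fin (k + 1) → V) : Prop :=
  ∀ i j, pairOK G R (t i) (t j)

/-- A relative ℓ∞ k-cochain for the pair (X,𝒴): vanishes on tuples contained
in a single Y ∈ 𝒴, and is bounded on tuples of each fixed diameter. -/
def RelCochain {I W : Type*} [NormedAddCommGroup W] [NormedSpace ℝ W]
    (G : SimpleGraph V) (Y : I → Set V) (k : ℕ) (α : Ck V k →ₗ[ℝ] W) : Prop :=
  (∀ t : Fin (k + 1) → V, (∃ i, ∀ j, t j ∈ Y i) → α (single t 1) = 0) ∧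
  (∀ R : ℕ, ∃ M : ℝ, ∀ t : Fin (k + 1) → V, tupDiamLe G R t →
    ‖α (single t 1)‖ ≤ M)

lemma reach_dist_triangle {V : Type*} (G : SimpleGraph V) {u v w : V}
    (h1 : G.Reachable u v) (h2 : G.Reachable v w) :
    G.dist u w ≤ G.dist u v + G.dist v w := by
  obtain ⟨p, hp⟩ := h1.exists_walk_length_eq_dist
  obtain ⟨q, hq⟩ := h2.exists_walk_length_eq_dist
  rw [← hp, ← hq, ← SimpleGraph.Walk.length_append]
  exact SimpleGraph.dist_le _

/-- a relative coarsely uniform map pulls back relative ℓ∞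
cochains to relative ℓ∞ cochains (hence induces a map in cohomology). -/
theorem pullback_relative_cochain
    {V' I I' W : Type*} [NormedAddCommGroup W] [NormedSpace ℝ W]
    (G : SimpleGraph V) (G' : SimpleGraph V')
    (Y : I → Set V) (Y' : I' → Set V')
    (hdisj : Pairwise (Function.onFun Disjoint Y))
    (hdisj' : Pairwise (Function.onFun Disjoint Y'))
    (f : V → V') (fs : I → I')
    (hsub : ∀ i, ∀ x ∈ Y i, f x ∈ Y' (fs i))
    (ρ : ℕ → ℕ) (hρ : Monotone ρ)
    (hunif : ∀ x₁ x₂ : V, (∃ i, x₁ ∈ Y i ∧ x₂ ∈ Y i) ∨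
      (G.Reachable x₁ x₂ → G'.Reachable (f x₁) (f x₂) ∧
        G'.dist (f x₁) (f x₂) ≤ ρ (G.dist x₁ x₂)))
    (k : ℕ) (α : Ck V' k →ₗ[ℝ] W) (hα : RelCochain G' Y' k α) :
    RelCochain G Y k (α.comp (Finsupp.lmapDomain ℝ ℝ fun t => f ∘ t)) := by
  obtain ⟨hvan, hbdd⟩ := hα
  constructor
  · rintro t ⟨i, hi⟩
    simp only [LinearMap.comp_apply, Finsupp.lmapDomain_apply, Finsupp.mapDomain_single]
    exact hvan _ ⟨fs i, fun j => hsub i _ (hi j)⟩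
  · intro R
    obtain ⟨M, hM⟩ := hbdd (2 * ρ R)
    refine ⟨max M 0, fun t ht => ?_⟩
    simp only [LinearMap.comp_apply, Finsupp.lmapDomain_apply, Finsupp.mapDomain_single]
    by_cases hall : ∃ a, ∀ j, t j ∈ Y a
    · obtain ⟨a, ha⟩ := hall
      rw [hvan (f ∘ t) ⟨fs a, fun j => hsub a (t j) (ha j)⟩]
      simp
    · push_neg at hall
      refine le_trans (hM _ ?_) (le_max_left _ _)
      -- key: any pair with a distance bound
      have key : ∀ i j : Fin (k+1), (∀ a, ¬ (t i ∈ Y a ∧ t j ∈ Y a)) →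
          G'.Reachable (f (t i)) (f (t j)) ∧ G'.dist (f (t i)) (f (t j)) ≤ ρ R := by
        intro i j hno
        rcases hunif (t i) (t j) with ⟨a, ha⟩ | h
        · exact absurd ha (hno a)
        · obtain ⟨hr, hd⟩ := h (ht i j).1
          refine ⟨hr, hd.trans (hρ (ht i j).2)⟩
      intro i j
      rcases hunif (t i) (t j) with ⟨a, hia, hja⟩ | h
      · -- t i, t j in the same Y a; pick l outside Y a
        obtain ⟨l, hl⟩ := hall a
        have hno : ∀ x : Fin (k+1), t x ∈ Y a → ∀ b, ¬ (t x ∈ Y b ∧ t l ∈ Y b) := by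
          intro x hx b ⟨hxb, hlb⟩
          rcases eq_or_ne a b with rfl | hab
          · exact hl hlb
          · exact (Set.disjoint_left.mp (hdisj hab) hx) hxb
        obtain ⟨hr1, hd1⟩ := key i l (hno i hia)
        obtain ⟨hr2, hd2⟩ := key j l (hno j hja)
        refine ⟨hr1.trans hr2.symm, ?_⟩
        calc G'.dist (f (t i)) (f (t j))
            ≤ G'.dist (f (t i)) (f (t l)) + G'.dist (f (t l)) (f (t j)) :=
              reach_dist_triangle G' hr1 hr2.symm
          _ ≤ ρ R + ρ R := by
              have := hd2
              rw [SimpleGraph.dist_comm] at this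
              exact add_le_add hd1 this
          _ = 2 * ρ R := by ring
        
      · obtain ⟨hr, hd⟩ := h (ht i j).1
        exact ⟨hr, hd.trans ((hρ (ht i j).2).trans (by omega))⟩
end

section
/- Let (f,f_#) and (f̂,f̂_#) be relatively close relative coarsely uniform maps from (X,𝒴) to (X',𝒴'), where the members of 𝒴 and 𝒴' are pairwise disjoint. Then the prism homotopy operator h, defined by (hα)(x₀,…,x_k) = Σ_{i=0}^k (−1)^i α(f(x₀),…,f(x_i), f̂(x_i),…, f̂(x_k)), maps C^{k+1}_{(∞)}(X',𝒴';V) into C^k_{(∞)}(X,𝒴;V); consequently f and f̂ induce the same map H^•_{(∞)}(X',𝒴';V) → H^•_{(∞)}(X,𝒴;V). -/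
open Finsupp

variable {V : Type*}

/-- The i-th prism tuple (f(x₀),…,f(x_i),f̂(x_i),…,f̂(x_k)). -/
def prismTuple {V' : Type*} (f fh : V → V') {k : ℕ} (i : Fin (k + 1))
    (t : Fin (k + 1) → V) : Fin (k + 2) → V' := fun j =>
  if h : (j : ℕ) ≤ (i : ℕ) then f (t ⟨j, lt_of_le_of_lt h i.isLt⟩)
  else fh (t ⟨(j : ℕ) - 1, by have := j.isLt; omega⟩)

/-- The prism homotopy operator h. -/
noncomputable def prismOp {V' W : Type*} [NormedAddCommGroup W] [NormedSpace ℝ W]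
    (f fh : V → V') {k : ℕ} (α : Ck V' (k + 1) →ₗ[ℝ] W) : Ck V k →ₗ[ℝ] W :=
  Finsupp.lsum ℝ fun t => LinearMap.toSpanSingleton ℝ W
    (∑ i : Fin (k + 1), (-1 : ℝ) ^ (i : ℕ) • α (single (prismTuple f fh i t) 1))

section Aux

lemma reachable_dist_triangle {V : Type*} {G : SimpleGraph V} {u v w : V}
    (h1 : G.Reachable u v) (h2 : G.Reachable v w) :
    G.dist u w ≤ G.dist u v + G.dist v w := by
  obtain ⟨p, hp⟩ := h1.exists_walk_length_eq_dist
  obtain ⟨q, hq⟩ := h2.exists_walk_length_eq_dist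
  rw [← hp, ← hq, ← SimpleGraph.Walk.length_append]
  apply SimpleGraph.dist_le

lemma pairOK_mono {V : Type*} {G : SimpleGraph V} {R R' : ℕ} {a b : V}
    (hR : R ≤ R') (h : pairOK G R a b) : pairOK G R' a b := by
  obtain ⟨h1, h2⟩ := h
  exact ⟨h1, h2.trans hR⟩

lemma pairOK_symm {V : Type*} {G : SimpleGraph V} {R : ℕ} {a b : V}
    (h : pairOK G R a b) : pairOK G R b a := by
  obtain ⟨h1, h2⟩ := h
  exact ⟨h1.symm, by rwa [SimpleGraph.dist_comm]⟩

lemma prism_pair_bound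
    {V V' I : Type*} {G : SimpleGraph V} {G' : SimpleGraph V'}
    {Y : I → Set V} (hdisj : Pairwise (Function.onFun Disjoint Y))
    (g1 g2 : V → V') {r1 r12 : ℕ → ℕ} (hr1 : Monotone r1) (hr12 : Monotone r12)
    (H1 : ∀ x₁ x₂ : V, (∃ i, x₁ ∈ Y i ∧ x₂ ∈ Y i) ∨
      (G.Reachable x₁ x₂ → G'.Reachable (g1 x₁) (g1 x₂) ∧
        G'.dist (g1 x₁) (g1 x₂) ≤ r1 (G.dist x₁ x₂)))
    (H12 : ∀ x₁ x₂ : V, (∃ i, x₁ ∈ Y i ∧ x₂ ∈ Y i) ∨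
      (G.Reachable x₁ x₂ → G'.Reachable (g1 x₁) (g2 x₂) ∧
        G'.dist (g1 x₁) (g2 x₂) ≤ r12 (G.dist x₁ x₂)))
    {k : ℕ} {R : ℕ} {t : Fin (k + 1) → V} (ht : tupDiamLe G R t)
    (hcase : ¬ ∃ i, ∀ j, t j ∈ Y i) (a b : Fin (k + 1)) :
    pairOK G' (r1 R + r12 R) (g1 (t a)) (g2 (t b)) := by
  rcases H12 (t a) (t b) with ⟨i, ha, hb⟩ | h
  · -- both in the same Y i; pick a point outside Y i
    push_neg at hcase
    obtain ⟨j₀, hj₀⟩ := hcase i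
    have hnot : ∀ x : V, x ∈ Y i → ¬ ∃ i', x ∈ Y i' ∧ t j₀ ∈ Y i' := by
      rintro x hx ⟨i', hx', hj'⟩
      rcases eq_or_ne i' i with rfl | hne
      · exact hj₀ hj'
      · exact Set.disjoint_left.mp (hdisj hne) hx' hx
    have h1 := (H1 (t a) (t j₀)).resolve_left (hnot _ ha) (ht a j₀).1
    have h2 := (H12 (t j₀) (t b)).resolve_left
      (fun ⟨i', hj', hb'⟩ => hnot _ hb ⟨i', hb', hj'⟩) (ht j₀ b).1
    refine ⟨h1.1.trans h2.1, ?_⟩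
    calc G'.dist (g1 (t a)) (g2 (t b))
        ≤ G'.dist (g1 (t a)) (g1 (t j₀)) + G'.dist (g1 (t j₀)) (g2 (t b)) :=
          reachable_dist_triangle h1.1 h2.1
      _ ≤ r1 R + r12 R := by
          gcongr
          · exact h1.2.trans (hr1 (ht a j₀).2)
          · exact h2.2.trans (hr12 (ht j₀ b).2)
  · obtain ⟨hre, hd⟩ := h (ht a b).1
    exact ⟨hre, hd.trans ((hr12 (ht a b).2).trans (Nat.le_add_left _ _))⟩

lemma prismOp_single {V V' W : Type*} [NormedAddCommGroup W] [NormedSpace ℝ W]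
    (f fh : V → V') {k : ℕ} (α : Ck V' (k + 1) →ₗ[ℝ] W) (t : Fin (k + 1) → V) :
    prismOp f fh α (single t 1) =
      ∑ i : Fin (k + 1), (-1 : ℝ) ^ (i : ℕ) • α (single (prismTuple f fh i t) 1) := by
  simp [prismOp, Finsupp.lsum_single, LinearMap.toSpanSingleton_apply]

end Aux

/-- the prism operator associated to two relatively close
relative coarsely uniform maps sends C^{k+1}_{(∞)}(X',𝒴';W) into
C^k_{(∞)}(X,𝒴;W); hence the two maps induce the same map in cohomology. -/
theorem prism_op_relative_cochain
    {V' I I' W : Type*} [NormedAddCommGroup W] [NormedSpace ℝ W]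
    (G : SimpleGraph V) (G' : SimpleGraph V')
    (Y : I → Set V) (Y' : I' → Set V')
    (hdisj : Pairwise (Function.onFun Disjoint Y))
    (hdisj' : Pairwise (Function.onFun Disjoint Y'))
    (f fh : V → V') (fs : I → I')
    (hsub : ∀ i, ∀ x ∈ Y i, f x ∈ Y' (fs i))
    (hsubh : ∀ i, ∀ x ∈ Y i, fh x ∈ Y' (fs i))
    (rhop rhoh ρ : ℕ → ℕ) (hrhop : Monotone rhop) (hrhoh : Monotone rhoh) (hρ : Monotone ρ)
    (hunif : ∀ x₁ x₂ : V, (∃ i, x₁ ∈ Y i ∧ x₂ ∈ Y i) ∨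
      (G.Reachable x₁ x₂ → G'.Reachable (f x₁) (f x₂) ∧
        G'.dist (f x₁) (f x₂) ≤ rhop (G.dist x₁ x₂)))
    (hunifh : ∀ x₁ x₂ : V, (∃ i, x₁ ∈ Y i ∧ x₂ ∈ Y i) ∨
      (G.Reachable x₁ x₂ → G'.Reachable (fh x₁) (fh x₂) ∧
        G'.dist (fh x₁) (fh x₂) ≤ rhoh (G.dist x₁ x₂)))
    (hclose : ∀ x₁ x₂ : V, (∃ i, x₁ ∈ Y i ∧ x₂ ∈ Y i) ∨
      (G.Reachable x₁ x₂ → G'.Reachable (f x₁) (fh x₂) ∧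
        G'.dist (f x₁) (fh x₂) ≤ ρ (G.dist x₁ x₂)))
    (k : ℕ) (α : Ck V' (k + 1) →ₗ[ℝ] W) (hα : RelCochain G' Y' (k + 1) α) :
    RelCochain G Y k (prismOp f fh α) := by
  have hzero : ∀ t : Fin (k + 1) → V, (∃ i, ∀ j, t j ∈ Y i) →
      prismOp f fh α (single t 1) = 0 := by
    rintro t ⟨i0, hi0⟩
    rw [prismOp_single]
    refine Finset.sum_eq_zero fun i _ => ?_
    rw [hα.1 (prismTuple f fh i t) ⟨fs i0, fun j => ?_⟩, smul_zero]
    by_cases h : (j : ℕ) ≤ (i : ℕ)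
    · simp only [prismTuple, dif_pos h]; exact hsub i0 _ (hi0 _)
    · simp only [prismTuple, dif_neg h]; exact hsubh i0 _ (hi0 _)
  constructor
  · exact hzero
  · intro R
    set N := 2 * rhop R + 2 * rhoh R + ρ R with hN
    obtain ⟨M', hM'⟩ := hα.2 N
    refine ⟨(k + 1) * max M' 0, fun t ht => ?_⟩
    by_cases hcase : ∃ i, ∀ j, t j ∈ Y i
    · rw [hzero t hcase, norm_zero]
      positivity
    · have hff : ∀ a b, pairOK G' N (f (t a)) (f (t b)) := fun a b =>
        pairOK_mono (by omega)
          (prism_pair_bound hdisj f f hrhop hrhop hunif hunif ht hcase a b)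
      have hfh : ∀ a b, pairOK G' N (f (t a)) (fh (t b)) := fun a b =>
        pairOK_mono (by omega)
          (prism_pair_bound hdisj f fh hrhop hρ hunif hclose ht hcase a b)
      have hhh : ∀ a b, pairOK G' N (fh (t a)) (fh (t b)) := fun a b =>
        pairOK_mono (by omega)
          (prism_pair_bound hdisj fh fh hrhoh hrhoh hunifh hunifh ht hcase a b)
      have hhf : ∀ a b, pairOK G' N (fh (t a)) (f (t b)) := fun a b =>
        pairOK_symm (hfh b a)
      have hbd : ∀ i : Fin (k + 1), ‖α (single (prismTuple f fh i t) 1)‖ ≤ max M' 0 := by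
        intro i
        refine le_trans (hM' _ fun p q => ?_) (le_max_left _ _)
        simp only [prismTuple]
        split_ifs
        · exact hff _ _
        · exact hfh _ _
        · exact hhf _ _
        · exact hhh _ _
      rw [prismOp_single]
      calc ‖∑ i : Fin (k + 1), (-1 : ℝ) ^ (i : ℕ) • α (single (prismTuple f fh i t) 1)‖
          ≤ ∑ i : Fin (k + 1), ‖(-1 : ℝ) ^ (i : ℕ) • α (single (prismTuple f fh i t) 1)‖ :=
            norm_sum_le _ _
        _ ≤ ∑ _i : Fin (k + 1), max M' 0 := by
            refine Finset.sum_le_sum fun i _ => ?_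
            rw [norm_smul, norm_pow, norm_neg, norm_one, one_pow, one_mul]
            exact hbd i
        _ = (k + 1) * max M' 0 := by
            simp [Finset.sum_const, Finset.card_univ, nsmul_eq_mul]
end
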